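/- arXiv:1505.02847 — 6 statements merged into one kernel-verified Lean document; each statement's English description precedes it below -/
import Mathlib

section
/- Let A be a countable set, let X be a perfectly normal T1 topological space, and let (≺_x)_{x∈X} be a parameter-dependent preference on A over X. Then (≺_x)_{x∈X} satisfies axioms (Asy), (NT) and (CD) if and only if there exists a function U : A × X → ℝ such that (i) for every x ∈ X, U(·,x) is a utility representation of ≺_x (i.e. a ≺_x b iff U(a,x) < U(b,x) for all a,b ∈ A), and (ii) for every a ∈ A, the map x ↦ U(a,x) is continuous on X. -/
/-!
Enumerate `A` as `f 0, f 1, …` and choose the utilities `u n = U (f n, ·)` one after the other,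
with values in `(-1, 1)`. At stage `n`, the value of `u n` at `x` must lie in the slot
`[l x, r x]`, where `l x` is the largest `u m x` with `f m` not above `f n` and `r x` the smallest
`u m x` with `f m` not below `f n`; it must equal both where `f n` is tied with an earlier
alternative, and lie strictly between them otherwise. Since every comparison holds on an open set,
`l` is upper and `r` lower semicontinuous, both are continuous where `l < r`, and `l = r` exactly
on the ties. In a perfectly normal space such a pair admits a continuous function between them,
strictly between where `l < r`: extend `l` from the closed set `{l = r}` by Tietze, and clamp the
extension into `[l + ε, r - ε]`, where `ε` is continuous and vanishes exactly on `{l = r}`.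
-/

open Set Filter Topology

section Semicontinuity

variable {X γ : Type*} [TopologicalSpace X]

theorem isOpen_setOf_lt_of_semicontinuous [LinearOrder γ] [TopologicalSpace γ]
    [DenselyOrdered γ] {g h : X → γ} (hg : UpperSemicontinuous g) (hh : LowerSemicontinuous h) :
    IsOpen {x | g x < h x} := by
  refine isOpen_iff_mem_nhds.2 fun x hx => ?_
  obtain ⟨c, hgc, hch⟩ := exists_between hx
  filter_upwards [hg x c hgc, hh x c hch] with y hgy hhy using hgy.trans hhy

theorem continuousAt_max_min [LinearOrder γ] [TopologicalSpace γ] [OrderTopology γ]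
    {lo τ hi : X → γ} {x : X}
    (hlo : UpperSemicontinuousAt lo x) (hτ : ContinuousAt τ x) (hhi : LowerSemicontinuousAt hi x)
    (hlo_eq : lo x = τ x) (hhi_eq : hi x = τ x) :
    ContinuousAt (fun y => max (lo y) (min (τ y) (hi y))) x := by
  have hx : max (lo x) (min (τ x) (hi x)) = τ x := by simp [hlo_eq, hhi_eq]
  rw [ContinuousAt, hx, tendsto_order]
  refine ⟨fun c hc => ?_, fun c hc => ?_⟩
  · filter_upwards [hτ.eventually_const_lt hc, hhi c (show c < hi x by rwa [hhi_eq])]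
      with y hτy hhiy using lt_max_of_lt_right (lt_min hτy hhiy)
  · filter_upwards [hlo c (show lo x < c by rwa [hlo_eq]), hτ.eventually_lt_const hc]
      with y hloy hτy using max_lt hloy (min_lt_of_left_lt hτy)

theorem continuousOn_compl_setOf_lt [LinearOrder γ] [TopologicalSpace γ] [OrderTopology γ]
    {g h : X → γ} (hg : UpperSemicontinuous g) (hh : LowerSemicontinuous h)
    (hgh : ∀ x, g x ≤ h x) : ContinuousOn g {x | g x < h x}ᶜ := by
  refine continuousOn_iff_lower_upperSemicontinuousOn.2
    ⟨fun x hx c hc => ?_, hg.upperSemicontinuousOn _⟩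
  have hx : g x = h x := (hgh x).eq_of_not_lt hx
  filter_upwards [nhdsWithin_le_nhds (hh x c (show c < h x by rwa [← hx])), self_mem_nhdsWithin]
    with y hy hyT
  rwa [(hgh y).eq_of_not_lt hyT]

variable [PerfectlyNormalSpace X] {g h : X → ℝ} (hg : UpperSemicontinuous g)
  (hh : LowerSemicontinuous h) (hgh : ∀ x, g x ≤ h x)
  (hgc : ∀ x, g x < h x → ContinuousAt g x) (hhc : ∀ x, g x < h x → ContinuousAt h x)
include hg hh hgh hgc hhc

theorem exists_continuous_margin :
    ∃ ε : X → ℝ, Continuous ε ∧ (∀ x, 0 ≤ ε x ∧ 2 * ε x ≤ h x - g x) ∧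
      ∀ x, g x < h x → 0 < ε x := by
  obtain ⟨ψ, hψT, hψ⟩ := perfectlyNormalSpace_iff_forall_isClosed_preimage_zero.1 ‹_› _
    (isOpen_setOf_lt_of_semicontinuous hg hh).isClosed_compl
  have hψ0 (x : X) : ψ x = 0 ↔ ¬ g x < h x := (Set.ext_iff.1 hψT x).symm
  refine ⟨fun x => min (ψ x) ((h x - g x) / 2), ?_, fun x => ⟨?_, ?_⟩, fun x hx => ?_⟩
  · refine continuous_iff_continuousAt.2 fun x => ?_
    by_cases hx : g x < h x
    · exact ψ.continuous.continuousAt.min (((hhc x hx).sub (hgc x hx)).div_const 2)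
    · have hx' : min (ψ x) ((h x - g x) / 2) = 0 := by simp [(hψ0 x).2 hx, (hgh x).eq_of_not_lt hx]
      rw [ContinuousAt, hx']
      exact squeeze_zero (fun y => le_min (hψ y).1 (by linarith [hgh y]))
        (fun y => min_le_left _ _) ((hψ0 x).2 hx ▸ ψ.continuous.tendsto x)
  · exact le_min (hψ x).1 (by linarith [hgh x])
  · linarith [min_le_right (ψ x) ((h x - g x) / 2)]
  · exact lt_min ((hψ x).1.lt_of_ne (Ne.symm fun h0 => (hψ0 x).1 h0 hx)) (by linarith)

theorem exists_continuous_between :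
    ∃ f : X → ℝ, Continuous f ∧ (∀ x, g x ≤ f x ∧ f x ≤ h x) ∧
      ∀ x, g x < h x → g x < f x ∧ f x < h x := by
  obtain ⟨ε, hε, hε_le, hε_pos⟩ := exists_continuous_margin hg hh hgh hgc hhc
  have hεT (x : X) (hx : ¬ g x < h x) : ε x = 0 := by
    linarith [hε_le x, (hgh x).eq_of_not_lt hx]
  obtain ⟨τ, hτ⟩ := ContinuousMap.exists_restrict_eq
    (isOpen_setOf_lt_of_semicontinuous hg hh).isClosed_compl
    ⟨_, (continuousOn_compl_setOf_lt hg hh hgh).domRestrict⟩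
  have hτT (x : X) (hx : ¬ g x < h x) : τ x = g x := congr($hτ ⟨x, hx⟩)
  refine ⟨fun x => max (g x + ε x) (min (τ x) (h x - ε x)), ?_, fun x => ?_, fun x hx => ?_⟩
  · refine continuous_iff_continuousAt.2 fun x => ?_
    by_cases hx : g x < h x
    · exact ((hgc x hx).add hε.continuousAt).max
        (τ.continuous.continuousAt.min ((hhc x hx).sub hε.continuousAt))
    · refine continuousAt_max_min
        (UpperSemicontinuousAt.add (hg x) hε.continuousAt.upperSemicontinuousAt)
        τ.continuous.continuousAt ?_ (by simp [hεT x hx, hτT x hx]) ?_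
      · simpa only [sub_eq_add_neg] using LowerSemicontinuousAt.add (g := fun y => -ε y) (hh x)
          hε.neg.continuousAt.lowerSemicontinuousAt
      · simp [hεT x hx, hτT x hx, (hgh x).eq_of_not_lt hx]
  · have := hε_le x
    exact ⟨by linarith [le_max_left (g x + ε x) (min (τ x) (h x - ε x))],
      max_le (by linarith) ((min_le_right _ _).trans (by linarith))⟩
  · have := hε_le x
    have := hε_pos x hx
    exact ⟨by linarith [le_max_left (g x + ε x) (min (τ x) (h x - ε x))],
      max_lt (by linarith) ((min_le_right _ _).trans_lt (by linarith))⟩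

end Semicontinuity

section FinsetFold

variable {X ι γ : Type*} [TopologicalSpace X] [LinearOrder γ]

theorem UpperSemicontinuous.finset_fold_max {s : Finset ι} {f : ι → X → γ} (c : γ)
    (hf : ∀ i ∈ s, UpperSemicontinuous (f i)) :
    UpperSemicontinuous fun x => s.fold max c fun i => f i x := by
  intro x y hy
  replace hy := (Finset.fold_max_lt _).1 hy
  filter_upwards [(eventually_all_finset s).2 fun i hi => hf i hi x y (hy.2 i hi)] with x' hx'
  exact (Finset.fold_max_lt _).2 ⟨hy.1, hx'⟩

theorem LowerSemicontinuous.finset_fold_min {s : Finset ι} {f : ι → X → γ} (c : γ)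
    (hf : ∀ i ∈ s, LowerSemicontinuous (f i)) :
    LowerSemicontinuous fun x => s.fold min c fun i => f i x := by
  intro x y hy
  replace hy := (Finset.lt_fold_min _).1 hy
  filter_upwards [(eventually_all_finset s).2 fun i hi => hf i hi x y (hy.2 i hi)] with x' hx'
  exact (Finset.lt_fold_min _).2 ⟨hy.1, hx'⟩

variable [TopologicalSpace γ] [OrderClosedTopology γ]

theorem Continuous.finset_fold_max {s : Finset ι} {f : ι → X → γ} (c : γ)
    (hf : ∀ i ∈ s, Continuous (f i)) : Continuous fun x => s.fold max c fun i => f i x := by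
  classical
  induction s using Finset.induction_on with
  | empty => exact continuous_const
  | insert i s hi ih =>
    simp only [Finset.fold_insert hi]
    exact (hf i (s.mem_insert_self i)).max (ih fun j hj => hf j (Finset.mem_insert_of_mem hj))

theorem Continuous.finset_fold_min {s : Finset ι} {f : ι → X → γ} (c : γ)
    (hf : ∀ i ∈ s, Continuous (f i)) : Continuous fun x => s.fold min c fun i => f i x := by
  classical
  induction s using Finset.induction_on with
  | empty => exact continuous_const
  | insert i s hi ih =>
    simp only [Finset.fold_insert hi]
    exact (hf i (s.mem_insert_self i)).min (ih fun j hj => hf j (Finset.mem_insert_of_mem hj))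

theorem upperSemicontinuous_ite_of_isOpen {p : X → Prop} [DecidablePred p]
    (hp : IsOpen {x | p x}) {c : γ} {f : X → γ} (hf : Continuous f) (hc : ∀ x, c ≤ f x) :
    UpperSemicontinuous fun x => if p x then c else f x := by
  intro x y hy
  by_cases hx : p x
  · filter_upwards [hp.mem_nhds hx] with x' hx'
    simpa [hx, hx'] using hy
  · replace hy : f x < y := by simpa [hx] using hy
    filter_upwards [hf.continuousAt.eventually_lt_const hy] with x' hx'
    split_ifs
    exacts [(hc x').trans_lt hx', hx']

theorem lowerSemicontinuous_ite_of_isOpen {p : X → Prop} [DecidablePred p]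
    (hp : IsOpen {x | p x}) {c : γ} {f : X → γ} (hf : Continuous f) (hc : ∀ x, f x ≤ c) :
    LowerSemicontinuous fun x => if p x then c else f x := by
  intro x y hy
  by_cases hx : p x
  · filter_upwards [hp.mem_nhds hx] with x' hx'
    simpa [hx, hx'] using hy
  · replace hy : y < f x := by simpa [hx] using hy
    filter_upwards [hf.continuousAt.eventually_const_lt hy] with x' hx'
    split_ifs
    exacts [hx'.trans_le (hc x'), hx']

end FinsetFold

/-- The axioms (Asy), (NT) and (CD). -/
structure IsContinuousStrictWeakOrder {A X : Type*} [TopologicalSpace X]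
    (P : X → A → A → Prop) : Prop where
  asymm : ∀ x a b, P x a b → ¬ P x b a
  neg_trans : ∀ x a b c, P x a b → P x c b ∨ P x a c
  isOpen_setOf : ∀ a b, IsOpen {x | P x a b}

namespace IsContinuousStrictWeakOrder

variable {A X : Type*} [TopologicalSpace X] {P : X → A → A → Prop}

theorem irrefl (hP : IsContinuousStrictWeakOrder P) (x : X) (a : A) : ¬ P x a a :=
  fun h => hP.asymm x a a h h

theorem eventually_iff_of_or (hP : IsContinuousStrictWeakOrder P) {x : X} {a b : A}
    (h : P x a b ∨ P x b a) : ∀ᶠ y in 𝓝 x, (P y a b ↔ P x a b) ∧ (P y b a ↔ P x b a) := by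
  rcases h with h | h
  · filter_upwards [(hP.isOpen_setOf a b).mem_nhds h] with y hy
    exact ⟨iff_of_true hy h, iff_of_false (hP.asymm y a b hy) (hP.asymm x a b h)⟩
  · filter_upwards [(hP.isOpen_setOf b a).mem_nhds h] with y hy
    exact ⟨iff_of_false (hP.asymm y b a hy) (hP.asymm x b a h), iff_of_true hy h⟩

end IsContinuousStrictWeakOrder

section Slot

variable {A X ι : Type*}

open Classical in
/-- Given utilities `w i` of the alternatives `b i`, `i ∈ S`, the utility of a further
alternative `a` at `x` has to lie between `slotLow` and `slotHigh`: the largest utility of an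
alternative not above `a` and the smallest utility of one not below `a`, padded by `-1` and `1`. -/
noncomputable def slotLow (P : X → A → A → Prop) (S : Finset ι) (b : ι → A) (w : ι → X → ℝ)
    (a : A) (x : X) : ℝ :=
  S.fold max (-1) fun i => if P x a (b i) then -1 else w i x

open Classical in
noncomputable def slotHigh (P : X → A → A → Prop) (S : Finset ι) (b : ι → A) (w : ι → X → ℝ)
    (a : A) (x : X) : ℝ :=
  S.fold min 1 fun i => if P x (b i) a then 1 else w i x

variable {P : X → A → A → Prop} {S : Finset ι} {b : ι → A} {w : ι → X → ℝ} {a : A} {x : X}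
  {i : ι}

theorem neg_one_le_slotLow : -1 ≤ slotLow P S b w a x :=
  (Finset.le_fold_max _).2 (Or.inl le_rfl)

theorem slotHigh_le_one : slotHigh P S b w a x ≤ 1 :=
  (Finset.fold_min_le _).2 (Or.inl le_rfl)

theorem slotLow_lt_one (hw : ∀ i ∈ S, ∀ x, |w i x| < 1) : slotLow P S b w a x < 1 := by
  refine (Finset.fold_max_lt _).2 ⟨by norm_num, fun i hi => ?_⟩
  split_ifs
  exacts [by norm_num, (abs_lt.1 (hw i hi x)).2]

theorem neg_one_lt_slotHigh (hw : ∀ i ∈ S, ∀ x, |w i x| < 1) : -1 < slotHigh P S b w a x := by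
  refine (Finset.lt_fold_min _).2 ⟨by norm_num, fun i hi => ?_⟩
  split_ifs
  exacts [by norm_num, (abs_lt.1 (hw i hi x)).1]

theorem le_slotLow (hi : i ∈ S) (h : ¬ P x a (b i)) : w i x ≤ slotLow P S b w a x := by
  classical
  exact (Finset.le_fold_max _).2 (Or.inr ⟨i, hi, by simp [h]⟩)

theorem slotHigh_le (hi : i ∈ S) (h : ¬ P x (b i) a) : slotHigh P S b w a x ≤ w i x := by
  classical
  exact (Finset.fold_min_le _).2 (Or.inr ⟨i, hi, by simp [h]⟩)

theorem rel_or_rel_of_slotLow_lt_slotHigh (h : slotLow P S b w a x < slotHigh P S b w a x)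
    (hi : i ∈ S) : P x a (b i) ∨ P x (b i) a := by
  by_contra! hn
  exact h.not_ge ((slotHigh_le hi hn.2).trans (le_slotLow hi hn.1))

variable [TopologicalSpace X]

section Order

variable (hP : IsContinuousStrictWeakOrder P) (hw : ∀ i ∈ S, ∀ x, |w i x| < 1)
  (hrep : ∀ i ∈ S, ∀ j ∈ S, ∀ x, P x (b i) (b j) ↔ w i x < w j x)
include hP hw hrep

theorem slotLow_lt (hi : i ∈ S) (h : P x a (b i)) : slotLow P S b w a x < w i x := by
  refine (Finset.fold_max_lt _).2 ⟨(abs_lt.1 (hw i hi x)).1, fun j hj => ?_⟩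
  split_ifs with hj'
  · exact (abs_lt.1 (hw i hi x)).1
  · exact (hrep j hj i hi x).1 ((hP.neg_trans x a (b i) (b j) h).resolve_right hj')

theorem lt_slotHigh (hi : i ∈ S) (h : P x (b i) a) : w i x < slotHigh P S b w a x := by
  refine (Finset.lt_fold_min _).2 ⟨(abs_lt.1 (hw i hi x)).2, fun j hj => ?_⟩
  split_ifs with hj'
  · exact (abs_lt.1 (hw i hi x)).2
  · exact (hrep i hi j hj x).1 ((hP.neg_trans x (b i) a (b j) h).resolve_left hj')

theorem slotLow_le_slotHigh : slotLow P S b w a x ≤ slotHigh P S b w a x := by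
  refine (Finset.fold_max_le _).2 ⟨(neg_one_lt_slotHigh hw).le, fun i hi => ?_⟩
  refine (Finset.le_fold_min _).2 ⟨?_, fun j hj => ?_⟩
  · split_ifs
    exacts [by norm_num, (abs_lt.1 (hw i hi x)).2.le]
  · split_ifs with hi' hj' hj''
    · norm_num
    · exact (abs_lt.1 (hw j hj x)).1.le
    · exact (abs_lt.1 (hw i hi x)).2.le
    · refine not_lt.1 fun hlt => ?_
      rcases hP.neg_trans x (b j) (b i) a ((hrep j hj i hi x).2 hlt) with h | h
      exacts [hi' h, hj'' h]

end Order

variable (hP : IsContinuousStrictWeakOrder P) (hwc : ∀ i ∈ S, Continuous (w i))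
include hP hwc

open Classical in
theorem upperSemicontinuous_slotLow (hw : ∀ i ∈ S, ∀ x, |w i x| < 1) :
    UpperSemicontinuous (slotLow P S b w a) :=
  UpperSemicontinuous.finset_fold_max _ fun i hi => upperSemicontinuous_ite_of_isOpen
    (hP.isOpen_setOf a (b i)) (hwc i hi) fun x => (abs_lt.1 (hw i hi x)).1.le

open Classical in
theorem lowerSemicontinuous_slotHigh (hw : ∀ i ∈ S, ∀ x, |w i x| < 1) :
    LowerSemicontinuous (slotHigh P S b w a) :=
  LowerSemicontinuous.finset_fold_min _ fun i hi => lowerSemicontinuous_ite_of_isOpen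
    (hP.isOpen_setOf (b i) a) (hwc i hi) fun x => (abs_lt.1 (hw i hi x)).2.le

theorem continuousAt_slotLow (h : slotLow P S b w a x < slotHigh P S b w a x) :
    ContinuousAt (slotLow P S b w a) x := by
  classical
  -- `a` is tied with no `b i` at `x`, so all comparisons with `a` are constant near `x`
  have hloc : ∀ᶠ y in 𝓝 x, ∀ i ∈ S, (P y a (b i) ↔ P x a (b i)) :=
    (eventually_all_finset S).2 fun i hi =>
      (hP.eventually_iff_of_or (rel_or_rel_of_slotLow_lt_slotHigh h hi)).mono fun _ hy => hy.1
  refine ContinuousAt.congr (f := fun y => S.fold max (-1) fun i =>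
    if P x a (b i) then -1 else w i y) ?_ ?_
  · refine (Continuous.finset_fold_max _ fun i hi => ?_).continuousAt
    split_ifs
    exacts [continuous_const, hwc i hi]
  · filter_upwards [hloc] with y hy
    exact Finset.fold_congr fun i hi => by simp only [hy i hi]

theorem continuousAt_slotHigh (h : slotLow P S b w a x < slotHigh P S b w a x) :
    ContinuousAt (slotHigh P S b w a) x := by
  classical
  have hloc : ∀ᶠ y in 𝓝 x, ∀ i ∈ S, (P y (b i) a ↔ P x (b i) a) :=
    (eventually_all_finset S).2 fun i hi =>
      (hP.eventually_iff_of_or (rel_or_rel_of_slotLow_lt_slotHigh h hi)).mono fun _ hy => hy.2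
  refine ContinuousAt.congr (f := fun y => S.fold min 1 fun i =>
    if P x (b i) a then 1 else w i y) ?_ ?_
  · refine (Continuous.finset_fold_min _ fun i hi => ?_).continuousAt
    split_ifs
    exacts [continuous_const, hwc i hi]
  · filter_upwards [hloc] with y hy
    exact Finset.fold_congr fun i hi => by simp only [hy i hi]

end Slot

namespace IsContinuousStrictWeakOrder

variable {A X : Type*} [TopologicalSpace X] {P : X → A → A → Prop}

theorem exists_continuous_insert [PerfectlyNormalSpace X] (hP : IsContinuousStrictWeakOrder P)
    {ι : Type*} (S : Finset ι) (b : ι → A) (w : ι → X → ℝ) (hwc : ∀ i ∈ S, Continuous (w i))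
    (hw : ∀ i ∈ S, ∀ x, |w i x| < 1)
    (hrep : ∀ i ∈ S, ∀ j ∈ S, ∀ x, P x (b i) (b j) ↔ w i x < w j x) (a : A) :
    ∃ v : X → ℝ, Continuous v ∧ (∀ x, |v x| < 1) ∧
      ∀ i ∈ S, ∀ x, (P x (b i) a ↔ w i x < v x) ∧ (P x a (b i) ↔ v x < w i x) := by
  have hslot (x : X) := slotLow_le_slotHigh (a := a) (x := x) hP hw hrep
  obtain ⟨v, hvc, hv, hv_lt⟩ := exists_continuous_between
    (upperSemicontinuous_slotLow hP hwc hw) (lowerSemicontinuous_slotHigh hP hwc hw) hslot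
    (fun _ h => continuousAt_slotLow hP hwc h) (fun _ h => continuousAt_slotHigh hP hwc h)
  have lt_of_rel : ∀ i ∈ S, ∀ x, P x (b i) a → w i x < v x := fun i hi x h => by
    rcases (hslot x).lt_or_eq with hlt | heq
    · exact (le_slotLow hi (hP.asymm _ _ _ h)).trans_lt (hv_lt x hlt).1
    · linarith [hv x, lt_slotHigh hP hw hrep hi h]
  have gt_of_rel : ∀ i ∈ S, ∀ x, P x a (b i) → v x < w i x := fun i hi x h => by
    rcases (hslot x).lt_or_eq with hlt | heq
    · exact (hv_lt x hlt).2.trans_le (slotHigh_le hi (hP.asymm _ _ _ h))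
    · linarith [hv x, slotLow_lt hP hw hrep hi h]
  have eq_of_tie : ∀ i ∈ S, ∀ x, ¬ P x (b i) a → ¬ P x a (b i) → v x = w i x :=
    fun i hi x h h' => ((hv x).2.trans (slotHigh_le hi h)).antisymm
      ((le_slotLow hi h').trans (hv x).1)
  refine ⟨v, hvc, fun x => abs_lt.2 ⟨?_, ?_⟩, fun i hi x => ⟨⟨lt_of_rel i hi x, fun h => ?_⟩,
    ⟨gt_of_rel i hi x, fun h => ?_⟩⟩⟩
  · have h1 : -1 ≤ slotLow P S b w a x := neg_one_le_slotLow
    have h2 : -1 < slotHigh P S b w a x := neg_one_lt_slotHigh hw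
    rcases (hslot x).lt_or_eq with hlt | heq
    · linarith [(hv_lt x hlt).1]
    · linarith [(hv x).1]
  · have h1 : slotLow P S b w a x < 1 := slotLow_lt_one hw
    have h2 : slotHigh P S b w a x ≤ 1 := slotHigh_le_one
    rcases (hslot x).lt_or_eq with hlt | heq
    · linarith [(hv_lt x hlt).2]
    · linarith [(hv x).2]
  · by_contra hn
    by_cases h' : P x a (b i)
    · exact lt_asymm h (gt_of_rel i hi x h')
    · exact h.ne' (eq_of_tie i hi x hn h')
  · by_contra hn
    by_cases h' : P x (b i) a
    · exact lt_asymm h (lt_of_rel i hi x h')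
    · exact h.ne (eq_of_tie i hi x h' hn)

end IsContinuousStrictWeakOrder

section Sequence

variable {A X : Type*} [TopologicalSpace X] {P : X → A → A → Prop}

def IsInsertion (P : X → A → A → Prop) (f : ℕ → A) (u : ℕ → X → ℝ) (n : ℕ) (v : X → ℝ) :
    Prop :=
  Continuous v ∧ (∀ x, |v x| < 1) ∧
    ∀ m < n, ∀ x, (P x (f m) (f n) ↔ u m x < v x) ∧ (P x (f n) (f m) ↔ v x < u m x)

/-- The body is `Classical.epsilon (IsInsertion P f (seqUtility P f) n)` unfolded, so that the
recursive calls visibly happen at `m < n`. -/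
noncomputable def seqUtility (P : X → A → A → Prop) (f : ℕ → A) (n : ℕ) : X → ℝ :=
  Classical.epsilon fun v => Continuous v ∧ (∀ x, |v x| < 1) ∧
    ∀ m < n, ∀ x, (P x (f m) (f n) ↔ seqUtility P f m x < v x) ∧
      (P x (f n) (f m) ↔ v x < seqUtility P f m x)
termination_by n

theorem seqUtility_eq (P : X → A → A → Prop) (f : ℕ → A) (n : ℕ) :
    seqUtility P f n = Classical.epsilon (IsInsertion P f (seqUtility P f) n) := by
  rw [seqUtility]
  rfl

theorem IsContinuousStrictWeakOrder.rel_iff_of_isInsertion (hP : IsContinuousStrictWeakOrder P)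
    {f : ℕ → A} {u : ℕ → X → ℝ} {N : ℕ} (hu : ∀ n < N, IsInsertion P f u n (u n)) {m k : ℕ}
    (hm : m < N) (hk : k < N) (x : X) : P x (f m) (f k) ↔ u m x < u k x := by
  rcases lt_trichotomy m k with h | rfl | h
  · exact ((hu k hk).2.2 m h x).1
  · exact iff_of_false (hP.irrefl x _) (lt_irrefl _)
  · exact ((hu m hm).2.2 k h x).2

theorem IsContinuousStrictWeakOrder.isInsertion_seqUtility [PerfectlyNormalSpace X]
    (hP : IsContinuousStrictWeakOrder P) (f : ℕ → A) (n : ℕ) :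
    IsInsertion P f (seqUtility P f) n (seqUtility P f n) := by
  induction n using Nat.strong_induction_on with
  | _ n ih =>
    rw [seqUtility_eq]
    refine Classical.epsilon_spec ?_
    have ih' : ∀ m ∈ Finset.range n, IsInsertion P f (seqUtility P f) m (seqUtility P f m) :=
      fun m hm => ih m (Finset.mem_range.1 hm)
    obtain ⟨v, hvc, hv, hrel⟩ := hP.exists_continuous_insert (Finset.range n) f (seqUtility P f)
      (fun m hm => (ih' m hm).1) (fun m hm => (ih' m hm).2.1)
      (fun m hm k hk => hP.rel_iff_of_isInsertion ih (Finset.mem_range.1 hm)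
        (Finset.mem_range.1 hk)) (f n)
    exact ⟨v, hvc, hv, fun m hm => hrel m (Finset.mem_range.2 hm)⟩

end Sequence

namespace IsContinuousStrictWeakOrder

variable {A X : Type*} [TopologicalSpace X] {P : X → A → A → Prop}

theorem exists_continuous_representation [Countable A] [PerfectlyNormalSpace X]
    (hP : IsContinuousStrictWeakOrder P) :
    ∃ U : A → X → ℝ, (∀ x a b, P x a b ↔ U a x < U b x) ∧ ∀ a, Continuous (U a) := by
  cases isEmpty_or_nonempty A
  · exact ⟨fun _ _ => 0, fun _ a => isEmptyElim a, fun a => isEmptyElim a⟩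
  obtain ⟨f, hf⟩ := exists_surjective_nat A
  have hseq := hP.isInsertion_seqUtility f
  refine ⟨fun a => seqUtility P f (Function.surjInv hf a), fun x a b => ?_, fun a => (hseq _).1⟩
  have := hP.rel_iff_of_isInsertion (fun n _ => hseq n)
    (Nat.lt_succ_of_le (le_max_left (Function.surjInv hf a) (Function.surjInv hf b)))
    (Nat.lt_succ_of_le (le_max_right _ _)) x
  rwa [Function.surjInv_eq hf, Function.surjInv_eq hf] at this

theorem of_representation {U : A → X → ℝ} (hU : ∀ x a b, P x a b ↔ U a x < U b x)
    (hc : ∀ a, Continuous (U a)) : IsContinuousStrictWeakOrder P where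
  asymm x a b h h' := lt_asymm ((hU x a b).1 h) ((hU x b a).1 h')
  neg_trans x a b c h := by
    simp only [hU] at h ⊢
    exact (lt_or_ge (U c x) (U b x)).imp_right fun hbc => h.trans_le hbc
  isOpen_setOf a b := by
    simp only [hU]
    exact isOpen_lt (hc a) (hc b)

end IsContinuousStrictWeakOrder

theorem stmt0_general {A X : Type*} [Countable A] [TopologicalSpace X]
    [PerfectlyNormalSpace X] (P : X → A → A → Prop) :
    ((∀ x a b, P x a b → ¬ P x b a) ∧
     (∀ x a b c, P x a b → P x c b ∨ P x a c) ∧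
     (∀ a b, IsOpen {x | P x a b})) ↔
    ∃ U : A × X → ℝ,
      (∀ x a b, P x a b ↔ U (a, x) < U (b, x)) ∧
      (∀ a, Continuous fun x => U (a, x)) := by
  constructor
  · rintro ⟨hasy, hnt, hcd⟩
    obtain ⟨U, hU, hc⟩ := IsContinuousStrictWeakOrder.exists_continuous_representation
      ⟨hasy, hnt, hcd⟩
    exact ⟨fun p => U p.1 p.2, hU, hc⟩
  · rintro ⟨U, hU, hc⟩
    have hP := IsContinuousStrictWeakOrder.of_representation (U := fun a x => U (a, x)) hU hc
    exact ⟨hP.asymm, hP.neg_trans, hP.isOpen_setOf⟩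

/-- Main theorem: for countable `A` and perfectly normal T1 `X`, the axioms (Asy), (NT)
and (CD) hold iff there is a representation continuous in the parameter. -/
theorem stmt0 {A X : Type*} [Countable A] [TopologicalSpace X] [T1Space X]
    [PerfectlyNormalSpace X] (P : X → A → A → Prop) :
    ((∀ x a b, P x a b → ¬ P x b a) ∧
     (∀ x a b c, P x a b → P x c b ∨ P x a c) ∧
     (∀ a b, IsOpen {x | P x a b})) ↔
    ∃ U : A × X → ℝ,
      (∀ x a b, P x a b ↔ U (a, x) < U (b, x)) ∧
      (∀ a, Continuous fun x => U (a, x)) :=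
  stmt0_general P
end

section
/- Let X be a T1 topological space. Then X is perfectly normal if and only if for every countable set A, every parameter-dependent preference (≺_x)_{x∈X} on A over X satisfying axioms (Asy), (NT) and (CD) admits a representation U : A × X → ℝ that is continuous in the parameter. -/
/-!
Perfect normality turns each open set `{x | a ≺ₓ b}` into the positivity set of a continuous
function, so there are continuous `d a b` with `sign (d a b x)` recording whether `a ≺ₓ b`,
`b ≺ₓ a`, or neither. Enumerate the alternatives. At each `x`, the utility of the `n`-th one must
lie strictly between the utilities of the earlier alternatives below it and those above it, or
equal the common utility of those indifferent to it. We take the point dividing that gap in the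
ratio of the distances `|d|` of the nearest constraints on either side from switching side: as a
constraint becomes tight, the point moves onto it, which makes it continuous in `x`.

Conversely, the preference `false ≺ₓ true ↔ x ∉ s` on `Bool` can only be represented continuously
if the closed set `s` is the zero set of the difference of the two utilities.
-/

open Set Filter Topology

section SignCompatible

variable {ι : Type*}

def SignCompatible (v d : ι → ℝ) : Prop :=
  ∀ m j, 0 ≤ d m → d j ≤ 0 → v m ≤ v j ∧ (d j < d m → v m < v j)

variable {v d : ι → ℝ}

lemma SignCompatible.symm (h : SignCompatible v d) : SignCompatible (1 - v) (-d) :=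
  fun m j hm hj => by
    simp only [Pi.sub_apply, Pi.one_apply, Pi.neg_apply, neg_nonneg, neg_nonpos,
      neg_lt_neg_iff, sub_le_sub_iff_left, sub_lt_sub_iff_left] at hm hj ⊢
    exact h j m hj hm

lemma signCompatible_of_represents {α : Type*} {r : α → α → Prop}
    (hnt : ∀ a b c, r a b → r c b ∨ r a c) {e : ι → α} {c : α}
    (hv : ∀ m j, r (e m) (e j) ↔ v m < v j) (hpos : ∀ m, 0 < d m ↔ r (e m) c)
    (hneg : ∀ m, d m < 0 ↔ r c (e m)) : SignCompatible v d := by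
  intro m j hm hj
  have hcm : ¬ r c (e m) := by rw [← hneg]; linarith
  have hjc : ¬ r (e j) c := by rw [← hpos]; linarith
  refine ⟨not_lt.1 fun hjm => ?_, fun hjm => (hv m j).1 ?_⟩
  · rcases hnt _ _ c ((hv j m).2 hjm) with h | h <;> contradiction
  · rcases hm.lt_or_eq with hm | hm
    · exact ((hnt _ _ (e j) ((hpos m).1 hm)).resolve_left hjc)
    · exact ((hnt _ _ (e m) ((hneg j).1 (hm ▸ hjm))).resolve_right hcm)

lemma one_sub_mem_Ioo (hv : ∀ m, v m ∈ Ioo 0 1) : ∀ m, (1 - v) m ∈ Ioo 0 1 := fun m => by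
  simp only [Pi.sub_apply, Pi.one_apply, mem_Ioo, sub_pos, sub_lt_self_iff]
  exact (hv m).symm

end SignCompatible

lemma continuous_finset_fold {ι X β : Type*} [TopologicalSpace X] [TopologicalSpace β]
    {op : β → β → β} [Std.Commutative op] [Std.Associative op]
    (hop : Continuous fun p : β × β => op p.1 p.2) (b : β) (s : Finset ι) {f : ι → X → β}
    (hf : ∀ i, Continuous (f i)) : Continuous fun x => s.fold op b (f · x) := by
  induction s using Finset.cons_induction with
  | empty => simpa using continuous_const
  | cons i s hi ih =>
    simp only [Finset.fold_cons]
    exact hop.comp ((hf i).prodMk ih)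

section GapPoint

variable {ι : Type*} [Fintype ι]

noncomputable def lowerSup (v d : ι → ℝ) : ℝ :=
  Finset.univ.fold max 0 fun m => if 0 ≤ d m then v m else 0

noncomputable def lowerGap (d : ι → ℝ) : ℝ :=
  Finset.univ.fold min 1 fun m => if 0 ≤ d m then d m else 1

/-- `min 1 (v m for d m ≤ 0)`, obtained from `lowerSup` by the reflection `v ↦ 1 - v`, `d ↦ -d`. -/
noncomputable def upperInf (v d : ι → ℝ) : ℝ := 1 - lowerSup (1 - v) (-d)

/-- Index `m` asks for a point `≥ v m` when `0 ≤ d m` and `≤ v m` when `d m ≤ 0`, strictly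
unless `d m = 0`; `0` and `1` are default bounds. `lowerGap d` measures how far the lower
constraints are from switching side. -/
noncomputable def gapPoint (v d : ι → ℝ) : ℝ :=
  lowerSup v d + (upperInf v d - lowerSup v d) * (lowerGap d / (lowerGap d + lowerGap (-d)))

variable {v d : ι → ℝ}

lemma le_lowerSup {m : ι} (hm : 0 ≤ d m) : v m ≤ lowerSup v d :=
  (Finset.le_fold_max _).2 (Or.inr ⟨m, Finset.mem_univ _, by simp [hm]⟩)

lemma lowerSup_nonneg : 0 ≤ lowerSup v d := (Finset.le_fold_max _).2 (Or.inl le_rfl)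

lemma lowerSup_le {c : ℝ} (hc : 0 ≤ c) (h : ∀ m, 0 ≤ d m → v m ≤ c) : lowerSup v d ≤ c :=
  (Finset.fold_max_le _).2 ⟨hc, fun m _ => by split_ifs with hm; exacts [h m hm, hc]⟩

lemma lowerSup_lt {c : ℝ} (hc : 0 < c) (h : ∀ m, 0 ≤ d m → v m < c) : lowerSup v d < c :=
  (Finset.fold_max_lt _).2 ⟨hc, fun m _ => by split_ifs with hm; exacts [h m hm, hc]⟩

lemma le_lowerGap {c : ℝ} (hc : c ≤ 1) (h : ∀ m, 0 ≤ d m → c ≤ d m) : c ≤ lowerGap d :=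
  (Finset.le_fold_min _).2 ⟨hc, fun m _ => by split_ifs with hm; exacts [h m hm, hc]⟩

lemma lowerGap_le {m : ι} (hm : 0 ≤ d m) : lowerGap d ≤ d m :=
  (Finset.fold_min_le _).2 (Or.inr ⟨m, Finset.mem_univ _, by simp [hm]⟩)

lemma lowerGap_nonneg : 0 ≤ lowerGap d := le_lowerGap zero_le_one fun _ hm => hm

lemma lowerGap_pos (hd : ∀ m, d m ≠ 0) : 0 < lowerGap d :=
  (Finset.lt_fold_min _).2 ⟨zero_lt_one, fun m _ => by
    split_ifs with hm; exacts [hm.lt_of_ne (hd m).symm, zero_lt_one]⟩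

lemma upperInf_le {m : ι} (hm : d m ≤ 0) : upperInf v d ≤ v m := by
  have := le_lowerSup (v := 1 - v) (d := -d) (m := m) (by simpa using hm)
  simp only [Pi.sub_apply, Pi.one_apply] at this
  unfold upperInf
  linarith

lemma upperInf_le_one : upperInf v d ≤ 1 := by
  unfold upperInf
  linarith [lowerSup_nonneg (v := 1 - v) (d := -d)]

lemma le_upperInf {c : ℝ} (hc : c ≤ 1) (h : ∀ m, d m ≤ 0 → c ≤ v m) : c ≤ upperInf v d := by
  have := lowerSup_le (v := 1 - v) (d := -d) (sub_nonneg.2 hc) fun m hm =>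
    sub_le_sub_left (h m (neg_nonneg.1 hm)) 1
  unfold upperInf
  linarith

lemma lt_upperInf {c : ℝ} (hc : c < 1) (h : ∀ m, d m ≤ 0 → c < v m) : c < upperInf v d := by
  have := lowerSup_lt (v := 1 - v) (d := -d) (sub_pos.2 hc) fun m hm =>
    sub_lt_sub_left (h m (neg_nonneg.1 hm)) 1
  unfold upperInf
  linarith

namespace SignCompatible

variable (h : SignCompatible v d) (hv : ∀ m, v m ∈ Ioo 0 1)
include h hv

lemma lowerSup_le_upperInf : lowerSup v d ≤ upperInf v d :=
  le_upperInf (lowerSup_le zero_le_one fun m _ => (hv m).2.le) fun j hj =>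
    lowerSup_le (hv j).1.le fun m hm => (h m j hm hj).1

lemma lowerSup_lt_upperInf (hd : ∀ m, d m ≠ 0) : lowerSup v d < upperInf v d :=
  lt_upperInf (lowerSup_lt one_pos fun m _ => (hv m).2) fun j hj =>
    lowerSup_lt (hv j).1 fun m hm => (h m j hm hj).2 ((hj.lt_of_ne (hd j)).trans_le hm)

lemma gapPoint_eq {z : ι} (hz : d z = 0) : gapPoint v d = v z := by
  have hG : lowerSup v d = v z :=
    le_antisymm (lowerSup_le (hv z).1.le fun m hm => (h m z hm hz.le).1) (le_lowerSup hz.ge)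
  have hα : lowerGap d = 0 := le_antisymm (hz ▸ lowerGap_le hz.ge) lowerGap_nonneg
  simp [gapPoint, hα, hG]

lemma lowerSup_lt_gapPoint_lt_upperInf (hd : ∀ m, d m ≠ 0) :
    lowerSup v d < gapPoint v d ∧ gapPoint v d < upperInf v d := by
  have hα : 0 < lowerGap d := lowerGap_pos hd
  have hβ : 0 < lowerGap (-d) := lowerGap_pos fun m => neg_ne_zero.2 (hd m)
  have hθ : lowerGap d / (lowerGap d + lowerGap (-d)) < 1 :=
    (div_lt_one (by positivity)).2 (by linarith)
  have hGH := h.lowerSup_lt_upperInf hv hd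
  unfold gapPoint
  constructor <;> nlinarith [div_pos hα (add_pos hα hβ)]

lemma gapPoint_le_upperInf : gapPoint v d ≤ upperInf v d := by
  have hθ : lowerGap d / (lowerGap d + lowerGap (-d)) ≤ 1 :=
    div_le_one_of_le₀ (le_add_of_nonneg_right lowerGap_nonneg)
      (add_nonneg lowerGap_nonneg lowerGap_nonneg)
  have hGH := h.lowerSup_le_upperInf hv
  unfold gapPoint
  nlinarith

lemma gapPoint_le_lowerSup_add (hβ : 0 < lowerGap (-d)) :
    gapPoint v d ≤ lowerSup v d + lowerGap d / lowerGap (-d) := by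
  have hθ : lowerGap d / (lowerGap d + lowerGap (-d)) ≤ lowerGap d / lowerGap (-d) :=
    div_le_div_of_nonneg_left lowerGap_nonneg hβ (le_add_of_nonneg_left lowerGap_nonneg)
  have hGH := h.lowerSup_le_upperInf hv
  have hH : upperInf v d - lowerSup v d ≤ 1 := by
    linarith [upperInf_le_one (v := v) (d := d), lowerSup_nonneg (v := v) (d := d)]
  have hθ₀ : 0 ≤ lowerGap d / (lowerGap d + lowerGap (-d)) :=
    div_nonneg lowerGap_nonneg (add_nonneg lowerGap_nonneg hβ.le)
  unfold gapPoint
  nlinarith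

lemma gapPoint_mem_Ioo : gapPoint v d ∈ Ioo 0 1 := by
  by_cases hz : ∃ z, d z = 0
  · obtain ⟨z, hz⟩ := hz
    exact h.gapPoint_eq hv hz ▸ hv z
  · push Not at hz
    have := h.lowerSup_lt_gapPoint_lt_upperInf hv hz
    exact ⟨lowerSup_nonneg.trans_lt this.1, this.2.trans_le upperInf_le_one⟩

lemma lt_gapPoint {m : ι} (hm : 0 < d m) : v m < gapPoint v d := by
  by_cases hz : ∃ z, d z = 0
  · obtain ⟨z, hz⟩ := hz
    rw [h.gapPoint_eq hv hz]
    exact (h m z hm.le hz.le).2 (hz ▸ hm)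
  · push Not at hz
    exact (le_lowerSup hm.le).trans_lt (h.lowerSup_lt_gapPoint_lt_upperInf hv hz).1

lemma gapPoint_one_sub_neg : gapPoint (1 - v) (-d) = 1 - gapPoint v d := by
  by_cases hz : ∃ z, d z = 0
  · obtain ⟨z, hz⟩ := hz
    rw [h.gapPoint_eq hv hz, h.symm.gapPoint_eq (one_sub_mem_Ioo hv) (by simpa using hz)]
    rfl
  · push Not at hz
    have hα : 0 < lowerGap d := lowerGap_pos hz
    have hβ : 0 < lowerGap (-d) := lowerGap_pos fun m => neg_ne_zero.2 (hz m)
    simp only [gapPoint, upperInf, sub_sub_cancel, neg_neg]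
    field_simp
    ring

lemma gapPoint_lt {m : ι} (hm : d m < 0) : gapPoint v d < v m := by
  have := h.symm.lt_gapPoint (one_sub_mem_Ioo hv) (m := m) (by simpa using hm)
  rw [h.gapPoint_one_sub_neg hv] at this
  simp only [Pi.sub_apply, Pi.one_apply] at this
  linarith

end SignCompatible

end GapPoint

section Continuity

variable {ι X : Type*} [Fintype ι] [TopologicalSpace X] {v d : ι → X → ℝ}

lemma continuousAt_fold_ite {op : ℝ → ℝ → ℝ} [Std.Commutative op] [Std.Associative op]
    (hop : Continuous fun p : ℝ × ℝ => op p.1 p.2) (b : ℝ) {f : ι → X → ℝ}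
    (hf : ∀ m, Continuous (f m)) (hd : ∀ m, Continuous (d m)) {x₀ : X} (h₀ : ∀ m, d m x₀ ≠ 0) :
    ContinuousAt (fun x => Finset.univ.fold op b fun m => if 0 ≤ d m x then f m x else b) x₀ := by
  have hsign : ∀ᶠ x in 𝓝 x₀, ∀ m, (0 ≤ d m x ↔ 0 < d m x₀) := eventually_all.2 fun m => by
    rcases (h₀ m).lt_or_gt with hm | hm
    · filter_upwards [(hd m).continuousAt.eventually_lt continuousAt_const hm] with x hx
      simp only [hx.not_ge, hm.not_gt]
    · filter_upwards [continuousAt_const.eventually_lt (hd m).continuousAt hm] with x hx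
      simp only [hx.le, hm]
  have hfrozen :
      Continuous fun x => Finset.univ.fold op b fun m => if 0 < d m x₀ then f m x else b :=
    continuous_finset_fold hop b _ fun m =>
      continuous_if_const _ (fun _ => hf m) fun _ => continuous_const
  refine hfrozen.continuousAt.congr ?_
  filter_upwards [hsign] with x hx
  exact Finset.fold_congr fun m _ => by simp only [hx m]

lemma continuousAt_gapPoint_of_ne_zero (hv : ∀ m, Continuous (v m)) (hd : ∀ m, Continuous (d m))
    {x₀ : X} (h₀ : ∀ m, d m x₀ ≠ 0) :
    ContinuousAt (fun x => gapPoint (v · x) (d · x)) x₀ := by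
  have hmax : Continuous fun p : ℝ × ℝ => max p.1 p.2 := continuous_fst.max continuous_snd
  have hmin : Continuous fun p : ℝ × ℝ => min p.1 p.2 := continuous_fst.min continuous_snd
  have hv' : ∀ m, Continuous fun x => 1 - v m x := fun m => continuous_const.sub (hv m)
  have hd' : ∀ m, Continuous fun x => -d m x := fun m => (hd m).neg
  have h₀' : ∀ m, -d m x₀ ≠ 0 := fun m => neg_ne_zero.2 (h₀ m)
  have hG : ContinuousAt (fun x => lowerSup (v · x) (d · x)) x₀ :=
    continuousAt_fold_ite hmax 0 hv hd h₀
  have hH : ContinuousAt (fun x => upperInf (v · x) (d · x)) x₀ :=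
    continuousAt_const.sub (continuousAt_fold_ite hmax 0 hv' hd' h₀')
  have hα : ContinuousAt (fun x => lowerGap (d · x)) x₀ := continuousAt_fold_ite hmin 1 hd hd h₀
  have hβ : ContinuousAt (fun x => lowerGap (-(d · x))) x₀ :=
    continuousAt_fold_ite hmin 1 hd' hd' h₀'
  have hpos : lowerGap (d · x₀) + lowerGap (-(d · x₀)) ≠ 0 :=
    (add_pos (lowerGap_pos h₀) (lowerGap_pos h₀')).ne'
  exact hG.add ((hH.sub hG).mul (hα.div (hα.add hβ) hpos))

lemma exists_pos_eventually_le_lowerGap_neg (hd : ∀ m, Continuous (d m)) (x₀ : X) :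
    ∃ β₀ > 0, ∀ᶠ x in 𝓝 x₀, (∀ j, d j x ≤ 0 → d j x₀ < 0) → β₀ ≤ lowerGap (-(d · x)) := by
  set b : X → ℝ := fun x => Finset.univ.fold min 1 fun j => if d j x₀ < 0 then -d j x else 1
  have hb : Continuous b := continuous_finset_fold (continuous_fst.min continuous_snd) 1 _
    fun j => continuous_if_const _ (fun _ => (hd j).neg) fun _ => continuous_const
  have hb₀ : 0 < b x₀ := (Finset.lt_fold_min _).2 ⟨one_pos, fun j _ => by
    split_ifs with hj; exacts [neg_pos.2 hj, one_pos]⟩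
  refine ⟨b x₀ / 2, half_pos hb₀, ?_⟩
  filter_upwards [hb.continuousAt.eventually_const_lt (half_lt_self hb₀)] with x hbx hup
  refine hbx.le.trans (le_lowerGap ((Finset.fold_min_le _).2 (Or.inl le_rfl)) fun j hj => ?_)
  exact (Finset.fold_min_le _).2 (Or.inr ⟨j, Finset.mem_univ _, by
    simp [hup j (by simpa using hj)]⟩)

lemma eventually_gapPoint_lt (hv : ∀ m, Continuous (v m)) (hd : ∀ m, Continuous (d m))
    (hc : ∀ x, SignCompatible (v · x) (d · x)) (h01 : ∀ m x, v m x ∈ Ioo 0 1)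
    {x₀ : X} {z : ι} (hz : d z x₀ = 0) {a : ℝ} (ha : v z x₀ < a) :
    ∀ᶠ x in 𝓝 x₀, gapPoint (v · x) (d · x) < a := by
  set η := (a - v z x₀) / 2 with hη
  have hη₀ : 0 < η := by linarith
  obtain ⟨β₀, hβ₀, hβ⟩ := exists_pos_eventually_le_lowerGap_neg hd x₀
  have hvx : ∀ᶠ x in 𝓝 x₀, ∀ m, v m x < v m x₀ + η := eventually_all.2 fun m =>
    (hv m).continuousAt.eventually_lt continuousAt_const (lt_add_of_pos_right _ hη₀)
  have hneg : ∀ᶠ x in 𝓝 x₀, ∀ m, d m x₀ < 0 → d m x < 0 := eventually_all.2 fun m => by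
    by_cases hm : d m x₀ < 0
    · filter_upwards [(hd m).continuousAt.eventually_lt continuousAt_const hm] with x hx
      exact fun _ => hx
    · exact Eventually.of_forall fun x h => absurd h hm
  filter_upwards [hvx, hneg, hβ, (hd z).continuousAt.eventually_lt continuousAt_const
      (show d z x₀ < η * β₀ by rw [hz]; positivity)] with x hvx hneg hβ hdz
  -- either a constraint that was not strictly upper at `x₀` is upper at `x`, and `upperInf` is
  -- close to `v z x₀`, or `z` is a strict lower constraint at `x` and `lowerGap` is small
  by_cases hup : ∃ j, d j x ≤ 0 ∧ 0 ≤ d j x₀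
  · obtain ⟨j, hjx, hj₀⟩ := hup
    calc gapPoint (v · x) (d · x) ≤ upperInf (v · x) (d · x) :=
          (hc x).gapPoint_le_upperInf (h01 · x)
      _ ≤ v j x := upperInf_le hjx
      _ < v j x₀ + η := hvx j
      _ ≤ v z x₀ + η := by linarith [(hc x₀ j z hj₀ hz.le).1]
      _ < a := by linarith
  · push Not at hup
    have hdz₀ : 0 < d z x := lt_of_not_ge fun h => (hup z h).ne hz
    replace hβ := hβ hup
    have hG : lowerSup (v · x) (d · x) ≤ v z x₀ + η := lowerSup_le (by linarith [(h01 z x₀).1])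
      fun m hm => (hvx m).le.trans (by
        have hm₀ : 0 ≤ d m x₀ := not_lt.1 fun h => (hneg m h).not_ge hm
        linarith [(hc x₀ m z hm₀ hz.le).1])
    calc gapPoint (v · x) (d · x)
        ≤ lowerSup (v · x) (d · x) + lowerGap (d · x) / lowerGap (-(d · x)) :=
          (hc x).gapPoint_le_lowerSup_add (h01 · x) (hβ₀.trans_le hβ)
      _ ≤ v z x₀ + η + d z x / β₀ :=
          add_le_add hG (div_le_div₀ hdz₀.le (lowerGap_le hdz₀.le) hβ₀ hβ)
      _ < a := by
          have : d z x / β₀ < η := (div_lt_iff₀ hβ₀).2 hdz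
          linarith

theorem continuous_gapPoint (hv : ∀ m, Continuous (v m)) (hd : ∀ m, Continuous (d m))
    (hc : ∀ x, SignCompatible (v · x) (d · x)) (h01 : ∀ m x, v m x ∈ Ioo 0 1) :
    Continuous fun x => gapPoint (v · x) (d · x) := by
  refine continuous_iff_continuousAt.2 fun x₀ => ?_
  by_cases hz : ∃ z, d z x₀ = 0
  · obtain ⟨z, hz⟩ := hz
    have hw : gapPoint (v · x₀) (d · x₀) = v z x₀ := (hc x₀).gapPoint_eq (h01 · x₀) hz
    refine tendsto_order.2 ⟨fun a ha => ?_, fun a ha =>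
      eventually_gapPoint_lt hv hd hc h01 hz (hw ▸ ha)⟩
    replace ha : a < v z x₀ := by simpa only [hw] using ha
    have hsymm := eventually_gapPoint_lt (v := fun m x => 1 - v m x) (d := fun m x => -d m x)
      (fun m => continuous_const.sub (hv m)) (fun m => (hd m).neg) (fun x => (hc x).symm)
      (fun m x => one_sub_mem_Ioo (h01 · x) m) (z := z) (a := 1 - a) (by simpa using hz)
      (by linarith)
    filter_upwards [hsymm] with x hx
    have := (hc x).gapPoint_one_sub_neg (h01 · x)
    change gapPoint (1 - (v · x)) (-(d · x)) < 1 - a at hx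
    linarith
  · push Not at hz
    exact continuousAt_gapPoint_of_ne_zero hv hd hz

end Continuity

section Utility

variable {X : Type*} [TopologicalSpace X]

noncomputable def utility (d : ℕ → ℕ → X → ℝ) (n : ℕ) (x : X) : ℝ :=
  gapPoint (fun m : Fin n => utility d m x) (fun m : Fin n => d m n x)
termination_by n
decreasing_by exact m.isLt

variable {d : ℕ → ℕ → X → ℝ} {P : X → ℕ → ℕ → Prop}
  (hasy : ∀ x a b, P x a b → ¬ P x b a) (hnt : ∀ x a b c, P x a b → P x c b ∨ P x a c)
  (hd : ∀ a b, Continuous (d a b)) (hpos : ∀ x a b, 0 < d a b x ↔ P x a b)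
  (hneg : ∀ x a b, d a b x < 0 ↔ P x b a)
include hasy hnt hd hpos hneg

theorem utility_spec (n : ℕ) :
    Continuous (utility d n) ∧ (∀ x, utility d n x ∈ Ioo 0 1) ∧
      ∀ m < n, ∀ x, (P x m n ↔ utility d m x < utility d n x) ∧
        (P x n m ↔ utility d n x < utility d m x) := by
  induction n using Nat.strong_induction_on with
  | _ n ih =>
  have hrep : ∀ x (m j : Fin n), P x m j ↔ utility d m x < utility d j x := by
    intro x m j
    rcases lt_trichotomy (m : ℕ) j with hmj | hmj | hmj
    · exact ((ih j j.isLt).2.2 m hmj x).1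
    · rw [hmj]; exact iff_of_false (fun h => hasy x _ _ h h) (lt_irrefl _)
    · exact ((ih m m.isLt).2.2 j hmj x).2
  have hc : ∀ x, SignCompatible (fun m : Fin n => utility d m x) (fun m => d m n x) :=
    fun x => signCompatible_of_represents (hnt x) (hrep x) (fun m => hpos x m n)
      (fun m => hneg x m n)
  have h01 : ∀ (m : Fin n) x, utility d m x ∈ Ioo 0 1 := fun m => (ih m m.isLt).2.1
  have hu : utility d n = fun x => gapPoint (fun m : Fin n => utility d m x) (d · n x) := by
    funext x; rw [utility]
  refine ⟨hu ▸ continuous_gapPoint (fun m => (ih m m.isLt).1) (fun m => hd m n) hc h01,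
    fun x => hu ▸ (hc x).gapPoint_mem_Ioo (h01 · x), fun m hm x => ?_⟩
  rw [hu, ← hpos, ← hneg]
  have hlt := (hc x).lt_gapPoint (h01 · x) (m := ⟨m, hm⟩)
  have heq := (hc x).gapPoint_eq (h01 · x) (z := ⟨m, hm⟩)
  have hgt := (hc x).gapPoint_lt (h01 · x) (m := ⟨m, hm⟩)
  dsimp only at hlt heq hgt ⊢
  rcases lt_trichotomy (d m n x) 0 with h | h | h
  · exact ⟨iff_of_false (by linarith) (by linarith [hgt h]), iff_of_true h (hgt h)⟩
  · exact ⟨iff_of_false (by linarith) (by linarith [heq h]),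
      iff_of_false (by linarith) (by linarith [heq h])⟩
  · exact ⟨iff_of_true h (hlt h), iff_of_false (by linarith) (by linarith [hlt h])⟩

theorem utility_represents :
    (∀ x m n, P x m n ↔ utility d m x < utility d n x) ∧ ∀ n, Continuous (utility d n) := by
  refine ⟨fun x m n => ?_, fun n => (utility_spec hasy hnt hd hpos hneg n).1⟩
  rcases lt_trichotomy m n with hmn | rfl | hmn
  · exact ((utility_spec hasy hnt hd hpos hneg n).2.2 m hmn x).1
  · exact iff_of_false (fun h => hasy x _ _ h h) (lt_irrefl _)
  · exact ((utility_spec hasy hnt hd hpos hneg m).2.2 n hmn x).2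

end Utility

section Representation

variable {X : Type*} [TopologicalSpace X]

lemma IsOpen.exists_continuous_pos_iff_mem [PerfectlyNormalSpace X] {U : Set X} (hU : IsOpen U) :
    ∃ f : X → ℝ, Continuous f ∧ (∀ x, 0 ≤ f x) ∧ ∀ x, 0 < f x ↔ x ∈ U := by
  obtain ⟨f, hfU, hf⟩ :=
    perfectlyNormalSpace_iff_forall_isClosed_preimage_zero.1 ‹_› Uᶜ hU.isClosed_compl
  refine ⟨f, f.continuous, fun x => (hf x).1, fun x => ?_⟩
  rw [(hf x).1.lt_iff_ne', ← not_not (a := x ∈ U), ← mem_compl_iff, hfU]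
  rfl

lemma exists_continuous_comparison [PerfectlyNormalSpace X] {A : Type*} {P : X → A → A → Prop}
    (hasy : ∀ x a b, P x a b → ¬ P x b a) (hcd : ∀ a b, IsOpen {x | P x a b}) :
    ∃ d : A → A → X → ℝ, (∀ a b, Continuous (d a b)) ∧
      ∀ x a b, (0 < d a b x ↔ P x a b) ∧ (d a b x < 0 ↔ P x b a) := by
  choose f hf hf0 hfP using fun a b => (hcd a b).exists_continuous_pos_iff_mem
  refine ⟨fun a b x => f a b x - f b a x, fun a b => (hf a b).sub (hf b a), fun x a b => ?_⟩
  have hpos : ∀ a b, 0 < f a b x - f b a x ↔ P x a b := fun a b =>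
    ⟨fun h => (hfP a b x).1 (by linarith [hf0 b a x]), fun h => by
      have := (hfP a b x).2 h
      linarith [not_lt.1 ((hfP b a x).not.2 (hasy x a b h))]⟩
  exact ⟨hpos a b, sub_neg.trans (sub_pos.symm.trans (hpos b a))⟩

theorem PerfectlyNormalSpace.exists_continuous_representation [PerfectlyNormalSpace X]
    {A : Type*} [Countable A] {P : X → A → A → Prop} (hasy : ∀ x a b, P x a b → ¬ P x b a)
    (hnt : ∀ x a b c, P x a b → P x c b ∨ P x a c) (hcd : ∀ a b, IsOpen {x | P x a b}) :
    ∃ U : A × X → ℝ, (∀ x a b, P x a b ↔ U (a, x) < U (b, x)) ∧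
      ∀ a, Continuous fun x => U (a, x) := by
  cases isEmpty_or_nonempty A
  · exact ⟨0, fun x a => isEmptyElim a, fun a => isEmptyElim a⟩
  obtain ⟨e, he⟩ := exists_surjective_nat A
  obtain ⟨d, hd, hsign⟩ := exists_continuous_comparison hasy hcd
  obtain ⟨hrep, hcont⟩ := utility_represents (P := fun x m n => P x (e m) (e n))
    (d := fun m n => d (e m) (e n)) (fun x m n => hasy x _ _) (fun x m n k => hnt x _ _ _)
    (fun m n => hd _ _) (fun x m n => (hsign x _ _).1) (fun x m n => (hsign x _ _).2)
  refine ⟨fun p => utility (fun m n => d (e m) (e n)) (Function.surjInv he p.1) p.2,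
    fun x a b => ?_, fun a => hcont (Function.surjInv he a)⟩
  conv_lhs => rw [← Function.surjInv_eq he a, ← Function.surjInv_eq he b]
  exact hrep x _ _

lemma perfectlyNormalSpace_of_forall_bool_representation
    (h : ∀ P : X → Bool → Bool → Prop, (∀ x a b, P x a b → ¬ P x b a) →
      (∀ x a b c, P x a b → P x c b ∨ P x a c) → (∀ a b, IsOpen {x | P x a b}) →
      ∃ U : Bool × X → ℝ, (∀ x a b, P x a b ↔ U (a, x) < U (b, x)) ∧
        ∀ a, Continuous fun x => U (a, x)) :
    PerfectlyNormalSpace X := by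
  refine perfectlyNormalSpace_iff_forall_isClosed_preimage_zero.2 fun s hs => ?_
  obtain ⟨U, hU, hUc⟩ := h (fun x a b => a < b ∧ x ∉ s) (fun x a b h h' => h.1.asymm h'.1)
    (fun x a b c h => (lt_or_ge c b).imp (⟨·, h.2⟩) fun hbc => ⟨h.1.trans_le hbc, h.2⟩)
    (fun a b => by by_cases hab : a < b <;> simp [hab, ← compl_def, hs.isOpen_compl])
  set f : X → ℝ := fun x => U (true, x) - U (false, x)
  have hf₀ : ∀ x, 0 ≤ f x := fun x =>
    sub_nonneg.2 (not_lt.1 ((hU x true false).not.1 (by simp)))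
  have hfs : ∀ x, f x = 0 ↔ x ∈ s := fun x => by
    rw [← not_iff_not, ← ne_eq, ← (hf₀ x).lt_iff_ne', sub_pos, ← hU x false true]
    simp
  refine ⟨⟨fun x => min (f x) 1, ((hUc true).sub (hUc false)).min continuous_const⟩, ?_,
    fun x => ⟨le_min (hf₀ x) zero_le_one, min_le_right _ _⟩⟩
  ext x
  rw [mem_preimage, mem_singleton_iff, ← hfs x]
  change f x = 0 ↔ min (f x) 1 = 0
  exact ⟨fun h => by simp [h],
    fun h => (min_eq_iff.1 h).elim And.left fun h => absurd h.1 one_ne_zero⟩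

end Representation

theorem stmt2_general {X : Type*} [TopologicalSpace X] :
    PerfectlyNormalSpace X ↔
    ∀ (A : Type) (_ : Countable A) (P : X → A → A → Prop),
      (∀ x a b, P x a b → ¬ P x b a) →
      (∀ x a b c, P x a b → P x c b ∨ P x a c) →
      (∀ a b, IsOpen {x | P x a b}) →
      ∃ U : A × X → ℝ,
        (∀ x a b, P x a b ↔ U (a, x) < U (b, x)) ∧
        (∀ a, Continuous fun x => U (a, x)) :=
  ⟨fun _ _ _ _ => PerfectlyNormalSpace.exists_continuous_representation,
    fun h => perfectlyNormalSpace_of_forall_bool_representation (h Bool inferInstance)⟩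

/-- A T1 space `X` is perfectly normal iff every parameter-dependent preference on a
countable set of alternatives satisfying (Asy), (NT) and (CD) has a representation that
is continuous in the parameter. -/
theorem stmt2 {X : Type*} [TopologicalSpace X] [T1Space X] :
    PerfectlyNormalSpace X ↔
    ∀ (A : Type) (_ : Countable A) (P : X → A → A → Prop),
      (∀ x a b, P x a b → ¬ P x b a) →
      (∀ x a b c, P x a b → P x c b ∨ P x a c) →
      (∀ a b, IsOpen {x | P x a b}) →
      ∃ U : A × X → ℝ,
        (∀ x a b, P x a b ↔ U (a, x) < U (b, x)) ∧
        (∀ a, Continuous fun x => U (a, x)) :=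
  stmt2_general
end

section
/- Let A be a countable set with the discrete topology, let X be a perfectly normal T1 topological space, and let (≺_x)_{x∈X} be a parameter-dependent preference on A over X. Then (≺_x)_{x∈X} satisfies axioms (Asy), (NT) and (CD) if and only if there exists a representation U : A × X → ℝ of the preference that is jointly continuous on A × X with the product topology. -/
/-!
Enumerate `A` and choose the utilities `u b` one alternative at a time. If continuous `u`
represents the preference on a finite set `S`, the new `u b` must lie strictly above `u a` where
`a ≺ b`, strictly below it where `b ≺ a`, and equal it elsewhere. Perfect normality makes every
open set `{a ≺ b}` the positivity set of a continuous function; from these one builds continuous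
margins `r a ≥ 0`, positive exactly where `a ≺ b` and at most half the gap from `u a` to every
alternative not below `b`, and dually `s e` for `b ≺ e`. Then `u a + r a ≤ u e - s e` wherever
neither `b ≺ a` nor `e ≺ b`, and a finite insertion argument (closed sets are zero sets, so
`q / (q + p)` interpolates between them) gives a continuous `u b` lying above every `u a + r a`
off `{b ≺ a}` and below every `u e - s e` off `{e ≺ b}`.
-/

open Set Filter Topology

theorem IsOpen.exists_continuous_nonneg_pos_iff {X : Type*} [TopologicalSpace X]
    [PerfectlyNormalSpace X] {s : Set X} (hs : IsOpen s) :
    ∃ f : X → ℝ, Continuous f ∧ (∀ x, 0 ≤ f x) ∧ ∀ x, 0 < f x ↔ x ∈ s := by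
  obtain ⟨f, hfs, hf⟩ :=
    perfectlyNormalSpace_iff_forall_isClosed_preimage_zero.mp ‹_› sᶜ hs.isClosed_compl
  refine ⟨f, f.continuous, fun x => (hf x).1, fun x => ?_⟩
  rw [(hf x).1.lt_iff_ne', ne_eq, ← mem_singleton_iff, ← mem_preimage, ← hfs, notMem_compl_iff]

theorem Continuous.mul_of_bounded_of_continuousAt {X : Type*} [TopologicalSpace X]
    {f g : X → ℝ} (hf : Continuous f) {C : ℝ} (hg : ∀ x, |g x| ≤ C)
    (hgc : ∀ x, f x ≠ 0 → ContinuousAt g x) : Continuous fun x => f x * g x := by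
  refine continuous_iff_continuousAt.2 fun x => ?_
  by_cases hx : f x = 0
  · have hf0 : Tendsto f (𝓝 x) (𝓝 0) := hx ▸ hf.tendsto x
    simpa [ContinuousAt, hx] using
      hf0.zero_mul_isBoundedUnder_le ⟨C, eventually_map.2 (Eventually.of_forall hg)⟩
  · exact hf.continuousAt.mul (hgc x hx)

theorem exists_continuous_ge_on_le_on {X : Type*} [TopologicalSpace X] [PerfectlyNormalSpace X]
    {F G : Set X} (hF : IsClosed F) (hG : IsClosed G) {α β : X → ℝ} (hα : Continuous α)
    (hβ : Continuous β) (hαβ : ∀ x ∈ F ∩ G, α x ≤ β x) :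
    ∃ θ : X → ℝ, Continuous θ ∧ (∀ x ∈ F, α x ≤ θ x) ∧ ∀ x ∈ G, θ x ≤ β x := by
  obtain ⟨q, hq, hq0, hqF⟩ := hF.isOpen_compl.exists_continuous_nonneg_pos_iff
  obtain ⟨p, hp, hp0, hpG⟩ := hG.isOpen_compl.exists_continuous_nonneg_pos_iff
  have hq_zero : ∀ x ∈ F, q x = 0 := fun x hx =>
    le_antisymm (not_lt.1 fun h => (hqF x).1 h hx) (hq0 x)
  have hp_zero : ∀ x ∈ G, p x = 0 := fun x hx =>
    le_antisymm (not_lt.1 fun h => (hpG x).1 h hx) (hp0 x)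
  -- `φ` is `0` on `F` and `1` on `G \ F`; it is discontinuous only on `F ∩ G`, where `α ≤ β`
  set φ : X → ℝ := fun x => q x / (q x + p x)
  have hφ : ∀ x, |φ x| ≤ 1 := fun x => by
    rw [abs_of_nonneg (by positivity [hq0 x, hp0 x])]
    exact div_le_one_of_le₀ (le_add_of_nonneg_right (hp0 x)) (by positivity [hq0 x, hp0 x])
  have hφc : Continuous fun x => max 0 (α x - β x) * φ x := by
    refine Continuous.mul_of_bounded_of_continuousAt (by fun_prop) hφ fun x hx => ?_
    have hne : q x + p x ≠ 0 := by
      by_cases hxF : x ∈ F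
      · have hxG : x ∉ G := fun hxG => hx (max_eq_left (by linarith [hαβ x ⟨hxF, hxG⟩]))
        linarith [(hpG x).2 hxG, hq0 x]
      · linarith [(hqF x).2 hxF, hp0 x]
    exact hq.continuousAt.div (hq.add hp).continuousAt hne
  refine ⟨fun x => α x - max 0 (α x - β x) * φ x, hα.sub hφc, fun x hx => ?_, fun x hx => ?_⟩
  · simp [φ, hq_zero x hx]
  · by_cases hxF : x ∈ F
    · simpa [φ, hq_zero x hxF] using hαβ x ⟨hxF, hx⟩
    · have hφ1 : φ x = 1 := by
        simp only [φ, hp_zero x hx, add_zero]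
        exact div_self ((hqF x).2 hxF).ne'
      show α x - max 0 (α x - β x) * φ x ≤ β x
      rw [hφ1, mul_one]
      linarith [le_max_right 0 (α x - β x)]

theorem exists_continuous_ge_on_le_on_finite {X ι : Type*} [TopologicalSpace X]
    [PerfectlyNormalSpace X] [Finite ι] {F G : ι → Set X} (hF : ∀ i, IsClosed (F i))
    (hG : ∀ j, IsClosed (G j)) {α β : ι → X → ℝ} (hα : ∀ i, Continuous (α i))
    (hβ : ∀ j, Continuous (β j)) (hαβ : ∀ i j, ∀ x ∈ F i ∩ G j, α i x ≤ β j x) :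
    ∃ θ : X → ℝ, Continuous θ ∧ (∀ i, ∀ x ∈ F i, α i x ≤ θ x) ∧
      ∀ j, ∀ x ∈ G j, θ x ≤ β j x := by
  cases isEmpty_or_nonempty ι
  · exact ⟨0, continuous_const, fun i => isEmptyElim i, fun j => isEmptyElim j⟩
  have := Fintype.ofFinite ι
  choose θ hθ hθF hθG using fun i j =>
    exists_continuous_ge_on_le_on (hF i) (hG j) (hα i) (hβ j) (hαβ i j)
  refine ⟨fun x => Finset.univ.sup' Finset.univ_nonempty fun i =>
    Finset.univ.inf' Finset.univ_nonempty fun j => θ i j x, ?_, fun i x hx => ?_, fun j x hx => ?_⟩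
  · exact Continuous.finset_sup'_apply _ fun i _ =>
      Continuous.finset_inf'_apply _ fun j _ => hθ i j
  · exact (Finset.le_inf' _ _ fun j _ => hθF i j x hx).trans
      (Finset.le_sup' (fun i => Finset.univ.inf' _ fun j => θ i j x) (Finset.mem_univ i))
  · exact Finset.sup'_le _ _ fun i _ =>
      (Finset.inf'_le (fun j => θ i j x) (Finset.mem_univ j)).trans (hθG i j x hx)

section Preference

variable {A X : Type*} [TopologicalSpace X] {P : X → A → A → Prop}

theorem exists_continuous_margin_s7 [PerfectlyNormalSpace X]
    (hNT : ∀ x a b c, P x a b → P x c b ∨ P x a c) (hCD : ∀ a b, IsOpen {x | P x a b})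
    {S : Finset A} {u : A → X → ℝ} (hu : ∀ a ∈ S, Continuous (u a))
    (hrep : ∀ x, ∀ a ∈ S, ∀ c ∈ S, P x a c → u a x < u c x)
    {a : A} (ha : a ∈ S) (b : A) :
    ∃ r : X → ℝ, Continuous r ∧ (∀ x, 0 ≤ r x) ∧ (∀ x, P x a b → 0 < r x) ∧
      (∀ x, ¬ P x a b → r x = 0) ∧
      ∀ x, ∀ e ∈ S, P x a b → ¬ P x e b → r x ≤ (u e x - u a x) / 2 := by
  choose p hp hp0 hpP using fun e => (hCD e b).exists_continuous_nonneg_pos_iff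
  have hp_zero : ∀ e x, ¬ P x e b → p e x = 0 := fun e x h =>
    le_antisymm (not_lt.1 fun h' => h ((hpP e x).1 h')) (hp0 e x)
  -- the term `e = a` of the infimum is `p a`, so `r` vanishes off `{x | P x a b}`
  set r : X → ℝ := fun x => S.inf' ⟨a, ha⟩ fun e => max ((u e x - u a x) / 2) (p e x)
  have hr0 : ∀ x, 0 ≤ r x := fun x =>
    Finset.le_inf' _ _ fun e _ => (hp0 e x).trans (le_max_right _ _)
  refine ⟨r, Continuous.finset_inf'_apply _ fun e he =>
    (((hu e he).sub (hu a ha)).div_const 2).max (hp e), hr0, fun x hab => ?_, fun x hab => ?_,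
    fun x e he hab heb => ?_⟩
  · refine (Finset.lt_inf'_iff _).2 fun e he => ?_
    by_cases heb : P x e b
    · exact lt_max_of_lt_right ((hpP e x).2 heb)
    · have := hrep x a ha e he ((hNT x a b e hab).resolve_left heb)
      exact lt_max_of_lt_left (by linarith)
  · refine le_antisymm ((Finset.inf'_le _ ha).trans ?_) (hr0 x)
    simp [hp_zero a x hab]
  · refine (Finset.inf'_le _ he).trans (max_le le_rfl ?_)
    have := hrep x a ha e he ((hNT x a b e hab).resolve_left heb)
    rw [hp_zero e x heb]
    linarith

theorem exists_continuous_extension [PerfectlyNormalSpace X]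
    (hAsy : ∀ x a b, P x a b → ¬ P x b a) (hNT : ∀ x a b c, P x a b → P x c b ∨ P x a c)
    (hCD : ∀ a b, IsOpen {x | P x a b}) {S : Finset A} {u : A → X → ℝ}
    (hu : ∀ a ∈ S, Continuous (u a)) (hrep : ∀ x, ∀ a ∈ S, ∀ c ∈ S, P x a c ↔ u a x < u c x)
    (b : A) :
    ∃ g : X → ℝ, Continuous g ∧
      ∀ x, ∀ a ∈ S, (P x a b ↔ u a x < g x) ∧ (P x b a ↔ g x < u a x) := by
  choose r hr hr0 hrpos hrzero hrle using fun a : S =>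
    exists_continuous_margin_s7 hNT hCD hu (fun x a ha c hc => (hrep x a ha c hc).1) a.2 b
  -- the same margins for the reversed preference, represented by `-u`
  choose s hs hs0 hspos hszero hsle using fun a : S =>
    exists_continuous_margin_s7 (P := fun x a c => P x c a) (u := fun a x => -u a x)
      (fun x a b c h => (hNT x b a c h).symm) (fun a b => hCD b a) (fun a ha => (hu a ha).neg)
      (fun x a ha c hc h => neg_lt_neg ((hrep x c hc a ha).1 h)) a.2 b
  have key : ∀ (a e : S), ∀ x ∈ {x | ¬ P x b a} ∩ {x | ¬ P x e b},
      u a x + r a x ≤ u e x - s e x := by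
    rintro a e x ⟨hba, heb⟩
    have hae : u a x ≤ u e x := not_lt.1 fun h =>
      (hNT x e a b ((hrep x e e.2 a a.2).2 h)).elim hba heb
    have hra : r a x ≤ (u e x - u a x) / 2 := by
      by_cases hab : P x a b
      · exact hrle a x e e.2 hab heb
      · rw [hrzero a x hab]
        linarith
    have hse : s e x ≤ (u e x - u a x) / 2 := by
      by_cases hbe : P x b e
      · linarith [hsle e x a a.2 hbe hba]
      · rw [hszero e x hbe]
        linarith
    linarith
  obtain ⟨g, hg, hgF, hgG⟩ := exists_continuous_ge_on_le_on_finite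
    (α := fun a x => u a x + r a x) (β := fun e x => u e x - s e x)
    (fun a : S => (hCD b a).isClosed_compl) (fun e : S => (hCD e b).isClosed_compl)
    (fun a : S => (hu a a.2).add (hr a)) (fun e : S => (hu e e.2).sub (hs e)) key
  refine ⟨g, hg, fun x a ha => ⟨⟨fun hab => ?_, fun hlt => ?_⟩, ⟨fun hba => ?_, fun hlt => ?_⟩⟩⟩
  · linarith [hgF ⟨a, ha⟩ x (hAsy x a b hab), hrpos ⟨a, ha⟩ x hab]
  · by_contra hab
    linarith [hgG ⟨a, ha⟩ x hab, hs0 ⟨a, ha⟩ x]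
  · linarith [hgG ⟨a, ha⟩ x (hAsy x b a hba), hspos ⟨a, ha⟩ x hba]
  · by_contra hba
    linarith [hgF ⟨a, ha⟩ x hba, hr0 ⟨a, ha⟩ x]

variable (P) in
def IsNextRepr (enc : A → ℕ) (u : A → X → ℝ) (b : A) (g : X → ℝ) : Prop :=
  Continuous g ∧ ∀ x a, enc a < enc b → (P x a b ↔ u a x < g x) ∧ (P x b a ↔ g x < u a x)

variable (P) in
-- the body is `IsNextRepr P enc (stepRepr enc) b`, unfolded so that each recursive call sits
-- under the hypothesis `enc a < enc b`
noncomputable def stepRepr (enc : A → ℕ) (b : A) : X → ℝ :=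
  Classical.epsilon fun g : X → ℝ => Continuous g ∧ ∀ x a, enc a < enc b →
    (P x a b ↔ stepRepr enc a x < g x) ∧ (P x b a ↔ g x < stepRepr enc a x)
termination_by enc b

theorem IsNextRepr.iff_lt (hAsy : ∀ x a b, P x a b → ¬ P x b a) {enc : A → ℕ}
    (henc : Function.Injective enc) {u : A → X → ℝ} {n : ℕ}
    (hu : ∀ b, enc b < n → IsNextRepr P enc u b (u b))
    {a c : A} (ha : enc a < n) (hc : enc c < n) (x : X) : P x a c ↔ u a x < u c x := by
  rcases lt_trichotomy (enc a) (enc c) with h | h | h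
  · exact ((hu c hc).2 x a h).1
  · rw [henc h]
    exact iff_of_false (fun h => hAsy x c c h h) (lt_irrefl _)
  · exact ((hu a ha).2 x c h).2

theorem isNextRepr_stepRepr [PerfectlyNormalSpace X] (hAsy : ∀ x a b, P x a b → ¬ P x b a)
    (hNT : ∀ x a b c, P x a b → P x c b ∨ P x a c) (hCD : ∀ a b, IsOpen {x | P x a b})
    {enc : A → ℕ} (henc : Function.Injective enc) (b : A) :
    IsNextRepr P enc (stepRepr P enc) b (stepRepr P enc b) := by
  have ih : ∀ a, enc a < enc b → IsNextRepr P enc (stepRepr P enc) a (stepRepr P enc a) :=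
    fun a _ => isNextRepr_stepRepr hAsy hNT hCD henc a
  set S := (Finset.range (enc b)).preimage enc henc.injOn
  have hS : ∀ a, a ∈ S ↔ enc a < enc b := by simp [S]
  obtain ⟨g, hg, hgS⟩ := exists_continuous_extension hAsy hNT hCD (S := S)
    (fun a ha => (ih a ((hS a).1 ha)).1)
    (fun x a ha c hc => IsNextRepr.iff_lt hAsy henc ih ((hS a).1 ha) ((hS c).1 hc) x) b
  rw [stepRepr]
  exact Classical.epsilon_spec ⟨g, hg, fun x a ha => hgS x a ((hS a).2 ha)⟩
termination_by enc b

theorem exists_continuous_repr [Countable A] [PerfectlyNormalSpace X]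
    (hAsy : ∀ x a b, P x a b → ¬ P x b a) (hNT : ∀ x a b c, P x a b → P x c b ∨ P x a c)
    (hCD : ∀ a b, IsOpen {x | P x a b}) :
    ∃ u : A → X → ℝ, (∀ a, Continuous (u a)) ∧ ∀ x a c, P x a c ↔ u a x < u c x := by
  obtain ⟨enc, henc⟩ := Countable.exists_injective_nat A
  have hspec := isNextRepr_stepRepr hAsy hNT hCD henc
  exact ⟨stepRepr P enc, fun a => (hspec a).1, fun x a c =>
    IsNextRepr.iff_lt hAsy henc (fun b _ => hspec b)
      (Nat.lt_succ_of_le (le_max_left (enc a) (enc c)))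
      (Nat.lt_succ_of_le (le_max_right (enc a) (enc c))) x⟩

end Preference

theorem stmt7_general {A X : Type*} [Countable A] [TopologicalSpace A] [DiscreteTopology A]
    [TopologicalSpace X] [PerfectlyNormalSpace X]
    (P : X → A → A → Prop) :
    ((∀ x a b, P x a b → ¬ P x b a) ∧
     (∀ x a b c, P x a b → P x c b ∨ P x a c) ∧
     (∀ a b, IsOpen {x | P x a b})) ↔
    ∃ U : A × X → ℝ,
      (∀ x a b, P x a b ↔ U (a, x) < U (b, x)) ∧ Continuous U := by
  constructor
  · rintro ⟨hAsy, hNT, hCD⟩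
    obtain ⟨u, hu, hrep⟩ := exists_continuous_repr hAsy hNT hCD
    exact ⟨fun z => u z.1 z.2, fun x a b => hrep x a b, continuous_prod_of_discrete_left.2 hu⟩
  · rintro ⟨U, hrep, hU⟩
    have hUa : ∀ a, Continuous fun x => U (a, x) := fun a => hU.comp (.prodMk_right a)
    simp only [hrep]
    exact ⟨fun x a b => lt_asymm, fun x a b c h => (lt_or_ge (U (c, x)) (U (b, x))).imp_right
      h.trans_le, fun a b => isOpen_lt (hUa a) (hUa b)⟩

/-- For countable discrete `A` and perfectly normal T1 `X`, the axioms (Asy), (NT) and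
(CD) hold iff there is a jointly continuous representation on `A × X`. -/
theorem stmt7 {A X : Type*} [Countable A] [TopologicalSpace A] [DiscreteTopology A]
    [TopologicalSpace X] [T1Space X] [PerfectlyNormalSpace X]
    (P : X → A → A → Prop) :
    ((∀ x a b, P x a b → ¬ P x b a) ∧
     (∀ x a b c, P x a b → P x c b ∨ P x a c) ∧
     (∀ a b, IsOpen {x | P x a b})) ↔
    ∃ U : A × X → ℝ,
      (∀ x a b, P x a b ↔ U (a, x) < U (b, x)) ∧ Continuous U :=
  stmt7_general P
end

section
/- Let Θ be a perfectly normal T1 topological space and let n be a positive integer. Then the product ℝⁿ₊₊ × Θ, where ℝⁿ₊₊ = {p ∈ ℝⁿ : p_i > 0 for all i} carries the Euclidean subspace topology and the product carries the product topology, is perfectly normal. -/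
/-!
A closed set `F ⊆ X × Y` with `X` second countable has open complement equal to the countable
union of the open rectangles `B ×ˢ V_B`, where `B` runs over a countable basis of `X` and `V_B` is
the largest open set with `B ×ˢ V_B ⊆ Fᶜ`. In perfectly normal factors every rectangle is a
cozero set (the product `f x * g y` of two cozero functions), and a countable intersection of
zero sets is again a zero set: it is the preimage of the closed point `0` of the metrizable,
hence perfectly normal, space `ι → ℝ`. So every closed set of `X × Y` is a zero set.
-/

open Set TopologicalSpace

section

variable {X Y : Type*} [TopologicalSpace X] [TopologicalSpace Y]

def IsZeroSet (s : Set X) : Prop :=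
  ∃ f : C(X, ℝ), s = f ⁻¹' {0}

theorem perfectlyNormalSpace_iff_forall_isClosed_isZeroSet :
    PerfectlyNormalSpace X ↔ ∀ s : Set X, IsClosed s → IsZeroSet s := by
  rw [perfectlyNormalSpace_iff_forall_isClosed_preimage_zero]
  refine forall₂_congr fun s _ => ⟨fun ⟨f, hf, _⟩ => ⟨f, hf⟩, fun ⟨f, hf⟩ => ?_⟩
  refine ⟨⟨fun x => min |f x| 1, by fun_prop⟩, ?_,
    fun x => ⟨le_min (abs_nonneg _) zero_le_one, min_le_right _ _⟩⟩
  ext x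
  simp +contextual [hf, min_eq_iff]

theorem IsClosed.isZeroSet [PerfectlyNormalSpace X] {s : Set X} (hs : IsClosed s) :
    IsZeroSet s :=
  perfectlyNormalSpace_iff_forall_isClosed_isZeroSet.mp ‹_› s hs

theorem IsZeroSet.preimage {s : Set Y} (hs : IsZeroSet s) (φ : C(X, Y)) :
    IsZeroSet (φ ⁻¹' s) := by
  obtain ⟨f, rfl⟩ := hs
  exact ⟨f.comp φ, rfl⟩

theorem IsZeroSet.iInter {ι : Type*} [Countable ι] {s : ι → Set X}
    (hs : ∀ i, IsZeroSet (s i)) : IsZeroSet (⋂ i, s i) := by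
  choose f hf using hs
  have hpi : (⋂ i, s i) = (fun x i => f i x) ⁻¹' {0} := by
    ext x
    simp [hf, funext_iff]
  rw [hpi]
  exact (isClosed_singleton (x := (0 : ι → ℝ))).isZeroSet.preimage
    ⟨_, continuous_pi fun i => (f i).continuous⟩

theorem IsZeroSet.compl_prod {s : Set X} {t : Set Y} (hs : IsZeroSet sᶜ) (ht : IsZeroSet tᶜ) :
    IsZeroSet (s ×ˢ t)ᶜ := by
  obtain ⟨f, hf⟩ := hs
  obtain ⟨g, hg⟩ := ht
  refine ⟨f.comp ContinuousMap.fst * g.comp ContinuousMap.snd, ?_⟩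
  rw [compl_prod_eq_union, hf, hg]
  ext p
  simp

theorem IsOpen.eq_biUnion_countableBasis_prod [SecondCountableTopology X] {W : Set (X × Y)}
    (hW : IsOpen W) :
    W = ⋃ B ∈ countableBasis X, B ×ˢ ⋃₀ {V | IsOpen V ∧ B ×ˢ V ⊆ W} := by
  refine Subset.antisymm (fun p hp => ?_) ?_
  · obtain ⟨u, v, hu, hv, hpu, hpv, huv⟩ := isOpen_prod_iff.mp hW p.1 p.2 hp
    obtain ⟨B, hB, hpB, hBu⟩ := (isBasis_countableBasis X).exists_subset_of_mem_open hpu hu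
    exact mem_biUnion hB ⟨hpB, v, ⟨hv, (prod_mono hBu le_rfl).trans huv⟩, hpv⟩
  · rintro p ⟨-, ⟨B, rfl⟩, -, ⟨-, rfl⟩, hpB, V, ⟨-, hBV⟩, hpV⟩
    exact hBV ⟨hpB, hpV⟩

theorem PerfectlyNormalSpace.prod_of_secondCountableTopology [SecondCountableTopology X]
    [PerfectlyNormalSpace X] [PerfectlyNormalSpace Y] : PerfectlyNormalSpace (X × Y) := by
  refine perfectlyNormalSpace_iff_forall_isClosed_isZeroSet.mpr fun F hF => ?_
  rw [← compl_compl F, hF.isOpen_compl.eq_biUnion_countableBasis_prod, compl_iUnion₂,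
    biInter_eq_iInter]
  have := (countable_countableBasis X).to_subtype
  refine IsZeroSet.iInter fun B => IsZeroSet.compl_prod ?_ ?_
  · exact (isOpen_of_mem_countableBasis B.2).isClosed_compl.isZeroSet
  · exact (isOpen_sUnion fun V hV => hV.1).isClosed_compl.isZeroSet

end

theorem stmt10_general {Θ : Type*} [TopologicalSpace Θ] [PerfectlyNormalSpace Θ]
    (n : ℕ) :
    PerfectlyNormalSpace ({p : Fin n → ℝ // ∀ i, 0 < p i} × Θ) :=
  PerfectlyNormalSpace.prod_of_secondCountableTopology

/-- The product of the strictly positive orthant of `ℝⁿ` with a perfectly normal T1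
space is perfectly normal. -/
theorem stmt10 {Θ : Type*} [TopologicalSpace Θ] [T1Space Θ] [PerfectlyNormalSpace Θ]
    (n : ℕ) (hn : 0 < n) :
    PerfectlyNormalSpace ({p : Fin n → ℝ // ∀ i, 0 < p i} × Θ) :=
  stmt10_general n
end

section
/- Let A ⊆ ℝ^m be a countable set of vectors with nonnegative coordinates that is discrete in the subspace topology (every point of A is isolated in A). Suppose that for every price-wealth pair (p,w) with p ∈ ℝ^m, p_i > 0 for all i, and w > 0, the budget set B(p,w) = {a ∈ A : p·a ≤ w} is finite. Then the budget correspondence (p,w) ↦ B(p,w) is upper hemicontinuous on the set of such price-wealth pairs: for every subset G ⊆ A, the set {(p,w) : B(p,w) ⊆ G} is open in ℝ^m₊₊ × ℝ₊₊ (with the Euclidean subspace topology). -/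
/-!
Near `(p, w)` all prices exceed `p / 2` and wealth stays below `2 w`, so every nearby budget set
lies in the finite set `B(p / 2, 2 w)`. Each of its finitely many bundles outside `B(p, w)` costs
strictly more than `w` at `(p, w)`, and that strict inequality persists near `(p, w)`. Hence nearby
budget sets are contained in `B(p, w)`, and therefore in `G` whenever `B(p, w) ⊆ G`.
-/

open Filter Topology

variable {ι : Type*} [Fintype ι]

def budgetSet (A : Set (ι → ℝ)) (p : ι → ℝ) (w : ℝ) : Set (ι → ℝ) :=
  {a ∈ A | p ⬝ᵥ a ≤ w}

lemma budgetSet_mono {A : Set (ι → ℝ)} (hA : ∀ a ∈ A, 0 ≤ a) {p q : ι → ℝ} {w v : ℝ}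
    (hqp : q ≤ p) (hwv : w ≤ v) : budgetSet A p w ⊆ budgetSet A q v :=
  fun a ⟨haA, ha⟩ =>
    ⟨haA, (dotProduct_le_dotProduct_of_nonneg_right hqp (hA a haA)).trans (ha.trans hwv)⟩

lemma eventually_budgetSet_subset {A : Set (ι → ℝ)} (hA : ∀ a ∈ A, 0 ≤ a) {p q : ι → ℝ}
    {w v : ℝ} (hqp : ∀ i, q i < p i) (hwv : w < v) (hfin : (budgetSet A q v).Finite) :
    ∀ᶠ x in 𝓝 (p, w), budgetSet A x.1 x.2 ⊆ budgetSet A p w := by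
  have hprice : ∀ᶠ x : (ι → ℝ) × ℝ in 𝓝 (p, w), ∀ i, q i < x.1 i :=
    eventually_all.2 fun i =>
      continuousAt_const.eventually_lt ((continuous_apply i).comp continuous_fst).continuousAt
        (hqp i)
  have hwealth : ∀ᶠ x : (ι → ℝ) × ℝ in 𝓝 (p, w), x.2 < v :=
    continuous_snd.continuousAt.eventually_lt continuousAt_const hwv
  have hcost : ∀ᶠ x : (ι → ℝ) × ℝ in 𝓝 (p, w),
      ∀ a ∈ budgetSet A q v, a ∉ budgetSet A p w → x.2 < x.1 ⬝ᵥ a := by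
    refine hfin.eventually_all.2 fun a ha => ?_
    by_cases hpa : a ∈ budgetSet A p w
    · exact Eventually.of_forall fun _ h => absurd hpa h
    · have hlt : w < p ⬝ᵥ a := lt_of_not_ge fun h => hpa ⟨ha.1, h⟩
      filter_upwards [continuous_snd.continuousAt.eventually_lt
        (continuous_fst.dotProduct continuous_const).continuousAt hlt] with x hx using fun _ => hx
  filter_upwards [hprice, hwealth, hcost] with x hxq hxv hxa a ha
  by_contra hpa
  have haq : a ∈ budgetSet A q v := budgetSet_mono hA (fun i => (hxq i).le) hxv.le ha
  exact (hxa a haq hpa).not_ge ha.2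

theorem stmt11_general (m : ℕ) (A : Set (Fin m → ℝ))
    (hApos : ∀ a ∈ A, ∀ i, 0 ≤ a i)
    (hfin : ∀ p : Fin m → ℝ, ∀ w : ℝ, (∀ i, 0 < p i) → 0 < w →
      {a ∈ A | ∑ i, p i * a i ≤ w}.Finite) :
    ∀ G : Set (Fin m → ℝ), G ⊆ A →
      IsOpen {y : {pw : (Fin m → ℝ) × ℝ // (∀ i, 0 < pw.1 i) ∧ 0 < pw.2} |
        {a ∈ A | ∑ i, y.val.1 i * a i ≤ y.val.2} ⊆ G} := by
  intro G _
  refine isOpen_iff_mem_nhds.2 fun ⟨(p, w), hp, hw⟩ hy => ?_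
  have hnear : ∀ᶠ x in 𝓝 (p, w), budgetSet A x.1 x.2 ⊆ budgetSet A p w :=
    eventually_budgetSet_subset hApos (fun i => half_lt_self (hp i)) (lt_two_mul_self hw)
      (hfin (fun i => p i / 2) (2 * w) (fun i => half_pos (hp i)) (by positivity))
  exact (continuous_subtype_val.tendsto _).eventually hnear |>.mono fun _ h => h.trans hy

/-- The budget correspondence `(p,w) ↦ {a ∈ A : p·a ≤ w}` over a countable discrete set
of nonnegative commodity bundles, with finite budget sets, is upper hemicontinuous on
the set of strictly positive price-wealth pairs. -/
theorem stmt11 (m : ℕ) (A : Set (Fin m → ℝ)) (hA : A.Countable)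
    (hApos : ∀ a ∈ A, ∀ i, 0 ≤ a i) (hdisc : DiscreteTopology A)
    (hfin : ∀ p : Fin m → ℝ, ∀ w : ℝ, (∀ i, 0 < p i) → 0 < w →
      {a ∈ A | ∑ i, p i * a i ≤ w}.Finite) :
    ∀ G : Set (Fin m → ℝ), G ⊆ A →
      IsOpen {y : {pw : (Fin m → ℝ) × ℝ // (∀ i, 0 < pw.1 i) ∧ 0 < pw.2} |
        {a ∈ A | ∑ i, y.val.1 i * a i ≤ y.val.2} ⊆ G} :=
  stmt11_general m A hApos hfin
end

section
/- Let Y = [0,1] × {0,1,2} be endowed with the order topology of the lexicographic order (where {0,1,2} carries the order 0 < 1 < 2, and (x₁,x₂) <_lex (y₁,y₂) iff x₁ < y₁, or x₁ = y₁ and x₂ < y₂). Let I = [c,d] ⊆ [0,1] be a closed interval with c < d, and let F = I × {0,2} ⊆ Y (the points of I whose second coordinate is an extreme element of {0,1,2}). Then there exists no continuous function f : Y → ℝ such that f⁻¹({0}) = F. -/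
/-!
If `f` vanished exactly on `F`, then `f (x, 0) = 0` for `x ∈ (c, d)` while `f (z, 1) ≠ 0` for
every `z`. As `z → x⁻`, `(z, 1) → (x, 0)` in the lexicographic order topology, so `f (z, 1) → 0`
from the left at every point of `(c, d)`. For a fixed `ε > 0`, the points where `|f (·, 1)| ≥ ε`
are then isolated from the left inside that set, and a second-countable linear order has only
countably many such points; hence `(c, d)` would be countable.
-/

open Filter Topology Set

section

variable {α : Type*} [LinearOrder α] [TopologicalSpace α] [OrderTopology α]
  [SecondCountableTopology α] {E : Type*} [MetricSpace E] {g : α → E} {a : E} {s : Set α}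

theorem countable_setOf_le_dist_of_tendsto_nhdsLT (hlim : ∀ x ∈ s, Tendsto g (𝓝[<] x) (𝓝 a))
    {ε : ℝ} (hε : 0 < ε) : {x ∈ s | ε ≤ dist (g x) a}.Countable := by
  set t := {x ∈ s | ε ≤ dist (g x) a}
  refine (countable_setOfPred_isolated_left_within (s := t)).mono fun x hx => mem_sep hx ?_
  have hclose : ∀ᶠ y in 𝓝[t ∩ Iio x] x, dist (g y) a < ε :=
    ((hlim x hx.1).mono_left (nhdsWithin_mono _ inter_subset_right)).eventually
      (Metric.ball_mem_nhds a hε)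
  have hfar : ∀ᶠ y in 𝓝[t ∩ Iio x] x, ε ≤ dist (g y) a :=
    eventually_nhdsWithin_of_forall fun y hy => hy.1.2
  exact eventually_false_iff_eq_bot.mp ((hclose.and hfar).mono fun _ h => h.2.not_gt h.1)

theorem countable_of_tendsto_nhdsLT_of_ne (hlim : ∀ x ∈ s, Tendsto g (𝓝[<] x) (𝓝 a))
    (hne : ∀ x ∈ s, g x ≠ a) : s.Countable := by
  refine (countable_iUnion fun n : ℕ =>
    countable_setOf_le_dist_of_tendsto_nhdsLT hlim (Nat.one_div_pos_of_nat (n := n))).mono ?_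
  intro x hx
  obtain ⟨n, hn⟩ := exists_nat_one_div_lt (dist_pos.mpr (hne x hx))
  exact mem_iUnion.mpr ⟨n, hx, hn.le⟩

end

theorem tendsto_toLex_nhdsLT {α β : Type*} [LinearOrder α] [TopologicalSpace α] [OrderTopology α]
    [LinearOrder β] [TopologicalSpace (α ×ₗ β)] [OrderTopology (α ×ₗ β)]
    (x : α) (b : β) {b₀ : β} (hb₀ : IsMin b₀) :
    Tendsto (fun z => toLex (z, b)) (𝓝[<] x) (𝓝 (toLex (x, b₀))) := by
  refine tendsto_order.mpr ⟨fun p hp => ?_, fun p hp => ?_⟩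
  · have hp₁ : (ofLex p).1 < x := by
      rcases Prod.Lex.lt_iff.mp hp with h | ⟨_, h⟩
      · exact h
      · exact absurd h hb₀.not_lt
    filter_upwards [Ioo_mem_nhdsLT hp₁] with z hz
    exact Prod.Lex.lt_iff.mpr (Or.inl hz.1)
  · filter_upwards [self_mem_nhdsWithin] with z (hz : z < x)
    exact (Prod.Lex.lt_iff.mpr (Or.inl hz)).trans hp

/-- In the lexicographic order topology on `Y = [0,1] × {0,1,2}`, the set
`F = I × {0,2}` (for a closed nondegenerate interval `I = [c,d] ⊆ [0,1]`) is not a zero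
set: no continuous real-valued function on `Y` has `F` as the preimage of `{0}`. -/
theorem stmt13 :
    letI : TopologicalSpace (Lex (Set.Icc (0 : ℝ) 1 × Fin 3)) := Preorder.topology _
    ∀ c d : Set.Icc (0 : ℝ) 1, c < d →
      ¬ ∃ f : Lex (Set.Icc (0 : ℝ) 1 × Fin 3) → ℝ, Continuous f ∧
        f ⁻¹' {0} = {y : Lex (Set.Icc (0 : ℝ) 1 × Fin 3) |
          (c ≤ (ofLex y).1 ∧ (ofLex y).1 ≤ d) ∧
          ((ofLex y).2 = 0 ∨ (ofLex y).2 = 2)} := by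
  intro c d hcd ⟨f, hf, hzeros⟩
  let : TopologicalSpace (Lex (Set.Icc (0 : ℝ) 1 × Fin 3)) := Preorder.topology _
  have : OrderTopology (Lex (Set.Icc (0 : ℝ) 1 × Fin 3)) := ⟨rfl⟩
  have hzero : ∀ x ∈ Ioo c d, f (toLex (x, 0)) = 0 := fun x hx => by
    simpa using (Set.ext_iff.mp hzeros (toLex (x, 0))).mpr (by simp [hx.1.le, hx.2.le])
  have hne : ∀ x, f (toLex (x, 1)) ≠ 0 := fun x hx => by
    simpa using (Set.ext_iff.mp hzeros (toLex (x, 1))).mp hx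
  have hcount : (Ioo c d).Countable := by
    refine countable_of_tendsto_nhdsLT_of_ne (g := fun x => f (toLex (x, 1))) (a := 0)
      (fun x hx => ?_) (fun x _ => hne x)
    have hfx := hf.tendsto (toLex (x, 0))
    rw [hzero x hx] at hfx
    exact hfx.comp (tendsto_toLex_nhdsLT x 1 isMin_bot)
  have hreal := hcount.image Subtype.val
  rw [image_subtype_val_Ioo, Cardinal.Real.Ioo_countable_iff] at hreal
  exact hreal.not_gt hcd
end
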